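/- arXiv:2509.22084 — 3 statements merged into one kernel-verified Lean document; each statement's English description precedes it below -/
import Mathlib

section
/- There exists an IFS {φ_0, φ_1} consisting of two bi-Lipschitz contractions on ℝ, with attractor E, such that the stationary measure μ associated with the probability weights (1/2, 1/2) satisfies: for every x ∈ E, the lower local dimension of μ at x equals the lower box dimension of E, the upper local dimension of μ at x equals the upper box dimension of E, and the lower box dimension of E is strictly smaller than the upper box dimension of E. In particular, μ is not exact dimensional. -/
open Filter Set Metric MeasureTheory Topology
open scoped ENNReal NNReal
set_option maxHeartbeats 2000000

/-- Minimal number of closed intervals of diameter at most `δ` (i.e. closed balls of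
radius `δ/2`) needed to cover `E`. -/
noncomputable def coverNum (E : Set ℝ) (δ : ℝ) : ℕ :=
  sInf {n : ℕ | ∃ c : Fin n → ℝ, E ⊆ ⋃ i, Metric.closedBall (c i) (δ / 2)}

/-- Lower box dimension of a set `E ⊆ ℝ`. -/
noncomputable def lowerBoxDim (E : Set ℝ) : ℝ :=
  Filter.liminf (fun δ : ℝ => Real.log (coverNum E δ) / (-Real.log δ)) (𝓝[>] 0)

/-- Upper box dimension of a set `E ⊆ ℝ`. -/
noncomputable def upperBoxDim (E : Set ℝ) : ℝ :=
  Filter.limsup (fun δ : ℝ => Real.log (coverNum E δ) / (-Real.log δ)) (𝓝[>] 0)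

/-- Assouad dimension of a set `E ⊆ ℝ`. -/
noncomputable def assouadDim (E : Set ℝ) : ℝ :=
  Filter.limsup (fun r : ℝ =>
      ⨆ R : Set.Ioi (0:ℝ), ⨆ x : E,
        Real.log (coverNum (E ∩ Set.Icc ((x:ℝ) - (R:ℝ)) ((x:ℝ) + (R:ℝ))) ((R:ℝ) * r)) /
          Real.log (1 / r))
    (𝓝[>] 0)

/-- Lower dimension of a set `E ⊆ ℝ`. -/
noncomputable def lowerDim (E : Set ℝ) : ℝ :=
  Filter.liminf (fun r : ℝ =>
      ⨅ R : Set.Ioo (0:ℝ) 1, ⨅ x : E,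
        Real.log (coverNum (E ∩ Set.Icc ((x:ℝ) - (R:ℝ)) ((x:ℝ) + (R:ℝ))) ((R:ℝ) * r)) /
          Real.log (1 / r))
    (𝓝[>] 0)

/-- Lower local dimension of a measure `μ` at `x`. -/
noncomputable def lowerLocalDim (μ : Measure ℝ) (x : ℝ) : ℝ :=
  Filter.liminf (fun δ : ℝ => Real.log ((μ (Metric.closedBall x δ)).toReal) / Real.log δ) (𝓝[>] 0)

/-- Upper local dimension of a measure `μ` at `x`. -/
noncomputable def upperLocalDim (μ : Measure ℝ) (x : ℝ) : ℝ :=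
  Filter.limsup (fun δ : ℝ => Real.log ((μ (Metric.closedBall x δ)).toReal) / Real.log δ) (𝓝[>] 0)

/-- Binary entropy function (note that `Real.log 0 = 0` in Mathlib, which implements the
convention `0 log 0 = 0`). -/
noncomputable def Hent (p : ℝ) : ℝ := -(p * Real.log p) - (1 - p) * Real.log (1 - p)

/-- `D(λ) = max_{(p,q) ∈ [0,1]²} (βH(p) + (1-β)H(q)) / (λ + β(1-β)(q-p) log 2)`. -/
noncomputable def Dfun (β lam : ℝ) : ℝ :=
  sSup ((fun pq : ℝ × ℝ =>
    (β * Hent pq.1 + (1 - β) * Hent pq.2) /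
      (lam + β * (1 - β) * (pq.2 - pq.1) * Real.log 2)) '' (Set.Icc 0 1 ×ˢ Set.Icc 0 1))

/-- `a_0 = 1`, `a_1 = 2`. -/
noncomputable def aBit (b : Bool) : ℝ := if b then 2 else 1

/-- The length function `ℓ(ω₁…ωₙ) = (a_{ω₁}⋯a_{ω_{⌊βn⌋}}) / (a_{ω₁}⋯a_{ω_n})^β · M^{-n}`.
A finite word `ω₁…ωₙ` is encoded as the list `[ω₁, …, ωₙ]`. -/
noncomputable def ellBM (β M : ℝ) (w : List Bool) : ℝ :=
  ((w.take ⌊β * (w.length : ℝ)⌋₊).map aBit).prod / ((w.map aBit).prod) ^ β *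
    M ^ (-(w.length : ℝ))

/-- The length function `ℓ*(ω₁…ωₙ) = (a_{ω₁}⋯a_{ω_{⌊βn⌋}}) / (a_{ω₁}⋯a_{ω_n})^β ·
(∏_{i=1}^n M_i)⁻¹`. -/
noncomputable def ellStar (β : ℝ) (Mseq : ℕ → ℝ) (w : List Bool) : ℝ :=
  ((w.take ⌊β * (w.length : ℝ)⌋₊).map aBit).prod / ((w.map aBit).prod) ^ β *
    (∏ i ∈ Finset.range w.length, Mseq (i + 1))⁻¹

/-- The left endpoint of the generating interval `I_w` of the Cantor set determined by the
length function `ℓ` (in the standard construction, the left child shares the left endpoint of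
its parent and the right child shares the right endpoint, so the endpoints are determined by
`ℓ`): passing from a prefix `p` to `p·1` moves the left endpoint by `ℓ(p) - ℓ(p·1)`. -/
noncomputable def leftEnd (ℓ : List Bool → ℝ) (w : List Bool) : ℝ :=
  ∑ k ∈ Finset.range w.length,
    if w.getD k false = true then ℓ (w.take k) - ℓ (w.take (k + 1)) else 0

/-- Right endpoint of the generating interval `I_w`. -/
noncomputable def rightEnd (ℓ : List Bool → ℝ) (w : List Bool) : ℝ := leftEnd ℓ w + ℓ w

/-- The Cantor set determined by the length function `ℓ`:
`E = ⋂_n ⋃_{|w| = n} I_w` with `I_w = [leftEnd ℓ w, rightEnd ℓ w]`. -/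
noncomputable def cantorOf (ℓ : List Bool → ℝ) : Set ℝ :=
  ⋂ n : ℕ, ⋃ (w : List Bool) (_ : w.length = n), Set.Icc (leftEnd ℓ w) (rightEnd ℓ w)

/-- The coding map `π : Ω^ℕ → E` associated with left-endpoint function `l`:
`π(ω) = sup_n l(ω₁…ωₙ)` (the prefixes' left endpoints increase to `π(ω)`). -/
noncomputable def codeMapL (l : List Bool → ℝ) (ω : ℕ → Bool) : ℝ :=
  ⨆ n : ℕ, l (List.ofFn fun k : Fin n => ω k)

/-- Prepend the symbol `i` to an infinite word: `iω`. -/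
def consSeq (i : Bool) (ω : ℕ → Bool) : ℕ → Bool := fun n => if n = 0 then i else ω (n - 1)

/-- The set of ratios `{ |I_{iω}|/|I_ω| : ω ∈ Ω* } ∪ { |G_{iω}|/|G_ω| : ω ∈ Ω* }` for a Cantor
construction with generating intervals `I_w = [l w, r w]` and gaps
`G_w = (r (w0), l (w1))`. -/
def ratioSet (l r : List Bool → ℝ) (i : Bool) : Set ℝ :=
  (Set.range fun w : List Bool => (r (i :: w) - l (i :: w)) / (r w - l w)) ∪
  (Set.range fun w : List Bool =>
    (l ((i :: w) ++ [true]) - r ((i :: w) ++ [false])) /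
      (l (w ++ [true]) - r (w ++ [false])))

/-- `u_n` in the additive representation of the symmetric Cantor set (`0`-indexed, so `c 0`
is the first ratio `c₁`). -/
noncomputable def uSym (c : ℕ → ℝ) (n : ℕ) : ℝ := (∏ j ∈ Finset.range n, c j) * (1 - c n)

/-- The coding map of the symmetric Cantor set: `π(ω) = Σ_n ω_n u_n`. -/
noncomputable def piSym (c : ℕ → ℝ) (ω : ℕ → Bool) : ℝ := ∑' n, if ω n then uSym c n else 0

/-- The symmetric Cantor set `E_c = { Σ_n ω_n u_n : ω ∈ {0,1}^ℕ }`. -/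
noncomputable def symCantor (c : ℕ → ℝ) : Set ℝ := Set.range (piSym c)

/-- Left endpoint of the generating interval `I_w` of the symmetric Cantor set. -/
noncomputable def lSym (c : ℕ → ℝ) (w : List Bool) : ℝ :=
  ∑ k ∈ Finset.range w.length, if w.getD k false = true then uSym c k else 0

/-- Right endpoint of the generating interval `I_w` of the symmetric Cantor set
(`|I_w| = c₁⋯c_n` for `|w| = n`). -/
noncomputable def rSym (c : ℕ → ℝ) (w : List Bool) : ℝ :=
  lSym c w + ∏ j ∈ Finset.range w.length, c j

/-- Support of a Borel measure on `ℝ`: points all of whose neighbourhoods have positive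
measure. -/
def measSupport (μ : Measure ℝ) : Set ℝ := {x | ∀ U ∈ 𝓝 x, 0 < μ U}

/-- `ν`-measure of the cylinder set `[b₁…bₙ]`, as a real number. -/
noncomputable def cylP (ν : Measure (ℕ → Bool)) {n : ℕ} (b : Fin n → Bool) : ℝ :=
  (ν {ω | ∀ i : Fin n, ω i = b i}).toReal

namespace S1
--CHUNK A

def bb (j : ℕ) : Bool := decide (Nat.log 2 (j+1) % 2 = 1)
def sfn (n : ℕ) : ℕ := ∑ j ∈ Finset.range n, (if bb j then 1 else 0)
noncomputable def cc (j : ℕ) : ℝ := if bb j then 1/16 else 1/4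
noncomputable def LL (n : ℕ) : ℝ := ∏ j ∈ Finset.range n, cc j
noncomputable def uu (n : ℕ) : ℝ := LL n - LL (n+1)

lemma cc_pos (j : ℕ) : 0 < cc j := by unfold cc; split <;> norm_num
lemma cc_le (j : ℕ) : cc j ≤ 1/4 := by unfold cc; split <;> norm_num
lemma cc_ge (j : ℕ) : (1/16 : ℝ) ≤ cc j := by unfold cc; split <;> norm_num
lemma LL_zero : LL 0 = 1 := by simp [LL]
lemma LL_succ (n : ℕ) : LL (n+1) = LL n * cc n := Finset.prod_range_succ _ _
lemma LL_pos (n : ℕ) : 0 < LL n := Finset.prod_pos (fun j _ => cc_pos j)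
lemma LL_succ_le (n : ℕ) : LL (n+1) ≤ LL n / 4 := by
  rw [LL_succ]; nlinarith [cc_le n, LL_pos n]
lemma LL_succ_ge (n : ℕ) : LL n / 16 ≤ LL (n+1) := by
  rw [LL_succ]; nlinarith [cc_ge n, LL_pos n]
lemma LL_le_pow (n : ℕ) : LL n ≤ (1/4 : ℝ)^n := by
  induction n with
  | zero => simp [LL_zero]
  | succ n ih =>
    rw [LL_succ, pow_succ]
    exact mul_le_mul ih (cc_le n) (cc_pos n).le (by positivity)
lemma LL_succ_lt (n : ℕ) : LL (n+1) < LL n := by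
  have := LL_succ_le n; have := LL_pos n; linarith
lemma LL_anti : StrictAnti LL := strictAnti_nat_of_succ_lt LL_succ_lt
lemma LL_le_one (n : ℕ) : LL n ≤ 1 := (LL_le_pow n).trans (by
  apply pow_le_one₀ <;> norm_num)
lemma uu_def (n : ℕ) : uu n = LL n - LL (n+1) := rfl
lemma uu_pos (n : ℕ) : 0 < uu n := by have := LL_succ_lt n; unfold uu; linarith
lemma uu_ge (n : ℕ) : 3/4 * LL n ≤ uu n := by
  have := LL_succ_le n; unfold uu; linarith
lemma uu_le (n : ℕ) : uu n ≤ LL n := by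
  have := LL_pos (n+1); unfold uu; linarith
lemma LL_succ_lt_uu (n : ℕ) : LL (n+1) < uu n := by
  have h1 := LL_succ_le n; have h2 := LL_pos n; have := uu_ge n; linarith
lemma sum_uu (n : ℕ) : ∑ k ∈ Finset.range n, uu k = 1 - LL n := by
  unfold uu; rw [Finset.sum_range_sub' LL]; rw [LL_zero]
lemma summable_uu : Summable uu := by
  apply summable_of_sum_range_le (c := 1) (fun n => (uu_pos n).le)
  intro n; rw [sum_uu]; have := LL_pos n; linarith
lemma LL_tendsto : Tendsto LL atTop (𝓝 0) := by
  apply squeeze_zero (fun n => (LL_pos n).le) LL_le_pow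
  exact tendsto_pow_atTop_nhds_zero_of_lt_one (by norm_num) (by norm_num)
lemma hasSum_tail (n : ℕ) : HasSum (fun k => uu (k + n)) (LL n) := by
  have hsumm : Summable (fun k => uu (k + n)) := (summable_nat_add_iff n).2 summable_uu
  rw [hsumm.hasSum_iff_tendsto_nat]
  have : ∀ m, ∑ k ∈ Finset.range m, uu (k + n) = LL n - LL (m + n) := by
    intro m
    have : ∀ k, uu (k + n) = LL (k + n) - LL (k + 1 + n) := by
      intro k; unfold uu; ring_nf
    simp_rw [this]
    rw [Finset.sum_range_sub' (fun k => LL (k + n))]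
    simp
  simp_rw [this]
  have : Tendsto (fun m => LL (m + n)) atTop (𝓝 0) :=
    LL_tendsto.comp (tendsto_add_atTop_nat n)
  simpa using tendsto_const_nhds.sub this


--CHUNK G
noncomputable def hs (n : ℕ) : ℝ := (n : ℝ) / (2 * ((n : ℝ) + (sfn n : ℝ)))

lemma sfn_succ (n : ℕ) : sfn (n+1) = sfn n + (if bb n then 1 else 0) :=
  Finset.sum_range_succ _ _

lemma sfn_le (n : ℕ) : sfn n ≤ n := by
  unfold sfn
  calc ∑ j ∈ Finset.range n, (if bb j then 1 else 0) ≤ ∑ j ∈ Finset.range n, 1 :=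
        Finset.sum_le_sum (fun j _ => by split <;> omega)
    _ = n := by simp

lemma sfn_mono : Monotone sfn := by
  apply monotone_nat_of_le_succ
  intro n; rw [sfn_succ]; omega

lemma sfn_add_le (n m : ℕ) : sfn (n + m) ≤ sfn n + m := by
  induction m with
  | zero => simp
  | succ m ih => rw [← add_assoc, sfn_succ]; split <;> omega

lemma log_LL (n : ℕ) : -Real.log (LL n) = 2 * ((n : ℝ) + (sfn n : ℝ)) * Real.log 2 := by
  induction n with
  | zero => simp [LL_zero, sfn]
  | succ n ih =>
    rw [LL_succ, Real.log_mul (LL_pos n).ne' (by unfold cc; split <;> norm_num), sfn_succ]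
    have hlog : Real.log (cc n) = -(if bb n then 4 else 2 : ℝ) * Real.log 2 := by
      unfold cc
      split
      · rw [show (1/16 : ℝ) = (2:ℝ)^(-(4:ℤ)) by norm_num, Real.log_zpow]
        push_cast; ring
      · rw [show (1/4 : ℝ) = (2:ℝ)^(-(2:ℤ)) by norm_num, Real.log_zpow]
        push_cast; ring
    rw [hlog]
    push_cast
    split <;> (rw [neg_add] at *; push_cast at *; linarith [ih])

lemma bb_block {j m : ℕ} (h1 : 2^m ≤ j+1) (h2 : j+1 < 2^(m+1)) :
    bb j = decide (m % 2 = 1) := by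
  unfold bb
  rw [Nat.log_eq_of_pow_le_of_lt_pow h1 h2]

lemma sfn_block_end (m : ℕ) :
    sfn (2^(m+2) - 1) = sfn (2^(m+1) - 1) + (if (m+1) % 2 = 1 then 2^(m+1) else 0) := by
  have h1 : 2^(m+1) - 1 ≤ 2^(m+2) - 1 := by
    have := Nat.pow_le_pow_right (by norm_num : 1 ≤ 2) (by omega : m+1 ≤ m+2)
    omega
  unfold sfn
  rw [Finset.range_eq_Ico,
    ← Finset.sum_Ico_consecutive _ (Nat.zero_le _) h1, ← Finset.range_eq_Ico]
  congr 1
  have hconst : ∀ j ∈ Finset.Ico (2^(m+1) - 1) (2^(m+2) - 1),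
      (if bb j then 1 else 0) = (if (m+1) % 2 = 1 then 1 else 0) := by
    intro j hj
    rw [Finset.mem_Ico] at hj
    have hp : 0 < 2^(m+1) := Nat.pow_pos (by norm_num)
    have hpow : (2:ℕ)^(m+1+1) = 2^(m+2) := by ring
    have := bb_block (m := m+1) (j := j) (by omega) (by rw [hpow]; omega)
    rw [this]
    simp
  rw [Finset.sum_congr rfl hconst, Finset.sum_const, Nat.card_Ico]
  have hcard : 2^(m+2) - 1 - (2^(m+1) - 1) = 2^(m+1) := by
    have : (2:ℕ)^(m+2) = 2 * 2^(m+1) := by ring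
    have hp : 0 < (2:ℕ)^(m+1) := Nat.pow_pos (by norm_num)
    omega
  rw [hcard, smul_eq_mul]
  split <;> omega

lemma two_le_pow {m : ℕ} (hm : 1 ≤ m) : 2 ≤ 2^m := by
  calc (2:ℕ) = 2^1 := by norm_num
    _ ≤ 2^m := Nat.pow_le_pow_right (by norm_num) hm

lemma sfn_vals (k : ℕ) :
    3 * sfn (2^(2*k+1) - 1) + 2 = 2^(2*k+1) ∧ 3 * sfn (2^(2*k+2) - 1) + 2 = 2^(2*k+3) := by
  induction k with
  | zero =>
    constructor
    · show 3 * sfn 1 + 2 = 2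
      have h0 : bb 0 = false := bb_block (m := 0) (by norm_num) (by norm_num)
      have : sfn 1 = 0 := by
        unfold sfn
        rw [Finset.sum_range_one, h0]
        rfl
      omega
    · show 3 * sfn 3 + 2 = 8
      have h0 : bb 0 = false := bb_block (m := 0) (by norm_num) (by norm_num)
      have h1 : bb 1 = true := bb_block (m := 1) (by norm_num) (by norm_num)
      have h2 : bb 2 = true := bb_block (m := 1) (by norm_num) (by norm_num)
      have : sfn 3 = 2 := by
        unfold sfn
        rw [Finset.sum_range_succ, Finset.sum_range_succ, Finset.sum_range_one, h0, h1, h2]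
        simp
      omega
  | succ k ih =>
    obtain ⟨ih1, ih2⟩ := ih
    have step1 : sfn (2^(2*k+3) - 1) = sfn (2^(2*k+2) - 1) := by
      have h := sfn_block_end (2*k+1)
      rw [show 2*k+1+2 = 2*k+3 by ring, show 2*k+1+1 = 2*k+2 by ring] at h
      rw [h, if_neg (by omega)]
      omega
    have step2 : sfn (2^(2*k+4) - 1) = sfn (2^(2*k+3) - 1) + 2^(2*k+3) := by
      have h := sfn_block_end (2*k+2)
      rw [show 2*k+2+2 = 2*k+4 by ring, show 2*k+2+1 = 2*k+3 by ring] at h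
      rw [h, if_pos (by omega)]
    constructor
    · rw [show 2*(k+1)+1 = 2*k+3 by ring, step1]
      exact ih2
    · rw [show 2*(k+1)+2 = 2*k+4 by ring, show 2*(k+1)+3 = 2*k+5 by ring, step2, step1]
      have hbig : (2:ℕ)^(2*k+5) = 4 * 2^(2*k+3) := by ring
      omega

lemma hs_val1 (k : ℕ) : hs (2^(2*k+2) - 1) = 3/10 := by
  have hv := (sfn_vals k).2
  set n := 2^(2*k+2) - 1 with hn
  have hX : (2:ℕ)^(2*k+2) ≥ 4 := by
    calc (2:ℕ)^(2*k+2) ≥ 2^2 := Nat.pow_le_pow_right (by norm_num) (by omega)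
      _ = 4 := by norm_num
  have hcast : (n : ℝ) = (2:ℝ)^(2*k+2) - 1 := by
    rw [hn]
    push_cast [Nat.cast_sub (by omega : 1 ≤ 2^(2*k+2))]
    ring
  have hscast : (sfn n : ℝ) = (2 * (2:ℝ)^(2*k+2) - 2)/3 := by
    have h3 : (3 : ℝ) * (sfn n : ℝ) + 2 = 2 * (2:ℝ)^(2*k+2) := by
      have : ((3 * sfn n + 2 : ℕ) : ℝ) = ((2^(2*k+3) : ℕ) : ℝ) := by rw [hv]
      push_cast at this
      rw [this, show 2*k+3 = (2*k+2)+1 by ring, pow_succ]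
      ring
    linarith
  have hXgt : (4:ℝ) ≤ (2:ℝ)^(2*k+2) := by exact_mod_cast hX
  unfold hs
  rw [hcast, hscast, div_eq_div_iff (by nlinarith) (by norm_num)]
  ring

lemma hs_val2 (k : ℕ) : 1/3 ≤ hs (2^(2*k+1) - 1) := by
  have hv := (sfn_vals k).1
  set n := 2^(2*k+1) - 1 with hn
  have hX : (2:ℕ)^(2*k+1) ≥ 2 := two_le_pow (by omega)
  have hcast : (n : ℝ) = (2:ℝ)^(2*k+1) - 1 := by
    rw [hn]
    push_cast [Nat.cast_sub (by omega : 1 ≤ 2^(2*k+1))]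
    ring
  have hscast : (sfn n : ℝ) = ((2:ℝ)^(2*k+1) - 2)/3 := by
    have h3 : (3 : ℝ) * (sfn n : ℝ) + 2 = (2:ℝ)^(2*k+1) := by
      have : ((3 * sfn n + 2 : ℕ) : ℝ) = ((2^(2*k+1) : ℕ) : ℝ) := by rw [hv]
      push_cast at this
      rw [this]
    linarith
  have hXgt : (2:ℝ) ≤ (2:ℝ)^(2*k+1) := by exact_mod_cast hX
  unfold hs
  rw [hcast, hscast]
  rw [div_le_div_iff₀ (by norm_num) (by nlinarith)]
  nlinarith

lemma hs_bounds {n : ℕ} (hn : 1 ≤ n) : 1/4 ≤ hs n ∧ hs n ≤ 1/2 := by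
  have h1 : (0:ℝ) < n := by exact_mod_cast hn
  have h2 : (0:ℝ) ≤ (sfn n : ℝ) := Nat.cast_nonneg _
  have h3 : (sfn n : ℝ) ≤ (n:ℝ) := by exact_mod_cast sfn_le n
  unfold hs
  constructor
  · rw [le_div_iff₀ (by linarith)]; linarith
  · rw [div_le_iff₀ (by linarith)]; linarith


--CHUNK B

-- placeholders from chunk A

noncomputable def pf (ω : ℕ → Bool) : ℝ := ∑' n, if ω n then uu n else 0
noncomputable def EE : Set ℝ := Set.range pf
noncomputable def lp (n : ℕ) (ω : ℕ → Bool) : ℝ :=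
  ∑ k ∈ Finset.range n, if ω k then uu k else 0
def cyl (n : ℕ) (ω : ℕ → Bool) : Set (ℕ → Bool) := {ω' | ∀ k < n, ω' k = ω k}
noncomputable def Iv (n : ℕ) (ω : ℕ → Bool) : Set ℝ := Set.Icc (lp n ω) (lp n ω + LL n)

lemma ite_nonneg (ω : ℕ → Bool) (k : ℕ) : 0 ≤ (if ω k then uu k else 0) := by
  split; exacts [(uu_pos _).le, le_rfl]
lemma ite_le (ω : ℕ → Bool) (k : ℕ) : (if ω k then uu k else 0) ≤ uu k := by
  split; exacts [le_rfl, (uu_pos _).le]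
lemma wsummable (ω : ℕ → Bool) : Summable (fun n => if ω n then uu n else 0) :=
  Summable.of_nonneg_of_le (ite_nonneg ω) (ite_le ω) summable_uu
lemma wsummable_tail (ω : ℕ → Bool) (n : ℕ) :
    Summable (fun k => if ω (k + n) then uu (k + n) else 0) :=
  (summable_nat_add_iff n).2 (wsummable ω)

noncomputable def tl (n : ℕ) (ω : ℕ → Bool) : ℝ := ∑' k, if ω (k + n) then uu (k + n) else 0

lemma pf_split (ω : ℕ → Bool) (n : ℕ) : pf ω = lp n ω + tl n ω :=
  ((wsummable ω).sum_add_tsum_nat_add n).symm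

lemma tl_nonneg (n : ℕ) (ω : ℕ → Bool) : 0 ≤ tl n ω :=
  tsum_nonneg (fun k => ite_nonneg ω _)
lemma tl_le (n : ℕ) (ω : ℕ → Bool) : tl n ω ≤ LL n := by
  have := Summable.tsum_le_tsum (fun k => ite_le ω (k + n)) (wsummable_tail ω n) (hasSum_tail n).summable
  rwa [(hasSum_tail n).tsum_eq] at this

lemma pf_mem_Iv (ω : ℕ → Bool) (n : ℕ) : pf ω ∈ Iv n ω := by
  rw [pf_split ω n]
  constructor
  · have := tl_nonneg n ω; linarith
  · have := tl_le n ω; linarith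

lemma lp_congr {n : ℕ} {ω ω' : ℕ → Bool} (h : ∀ k < n, ω k = ω' k) : lp n ω = lp n ω' := by
  unfold lp; apply Finset.sum_congr rfl
  intro k hk; rw [h k (Finset.mem_range.1 hk)]

lemma lp_succ (n : ℕ) (ω : ℕ → Bool) :
    lp (n+1) ω = lp n ω + (if ω n then uu n else 0) := Finset.sum_range_succ _ _

/-- key separation estimate -/
lemma sep {n : ℕ} {ω ω' : ℕ → Bool} (h : ∀ k < n, ω k = ω' k)
    (h0 : ω n = false) (h1 : ω' n = true) :
    LL n / 2 ≤ pf ω' - pf ω ∧ pf ω' - pf ω ≤ LL n := by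
  have e1 : pf ω = lp n ω + tl (n+1) ω := by
    rw [pf_split ω (n+1), lp_succ, h0]; simp
  have e2 : pf ω' = lp n ω + uu n + tl (n+1) ω' := by
    rw [pf_split ω' (n+1), lp_succ, h1, lp_congr (fun k hk => (h k hk).symm)]; simp
  have b1 := tl_nonneg (n+1) ω; have b2 := tl_le (n+1) ω
  have b3 := tl_nonneg (n+1) ω'; have b4 := tl_le (n+1) ω'
  have hu := uu_def n; have hl := LL_succ_le n
  constructor
  · rw [e1, e2]; linarith
  · rw [e1, e2]; linarith

lemma exists_first_diff {ω ω' : ℕ → Bool} (h : ω ≠ ω') :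
    ∃ n, (∀ k < n, ω k = ω' k) ∧ ω n ≠ ω' n := by
  have hex : ∃ n, ω n ≠ ω' n := by
    by_contra hc; push_neg at hc; exact h (funext hc)
  refine ⟨Nat.find hex, fun k hk => ?_, Nat.find_spec hex⟩
  by_contra hc; exact absurd (Nat.find_le hc) (not_le.2 hk)

lemma abs_sep {n : ℕ} {ω ω' : ℕ → Bool} (h : ∀ k < n, ω k = ω' k) (hd : ω n ≠ ω' n) :
    LL n / 2 ≤ |pf ω - pf ω'| ∧ |pf ω - pf ω'| ≤ LL n := by
  rcases Bool.eq_false_or_eq_true (ω n) with h0 | h0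
  · have h1 : ω' n = false := by cases hb : ω' n <;> simp_all
    obtain ⟨a, b⟩ := sep (fun k hk => (h k hk).symm) h1 h0
    rw [abs_of_nonneg (by linarith)]; exact ⟨a, b⟩
  · have h1 : ω' n = true := by cases hb : ω' n <;> simp_all
    obtain ⟨a, b⟩ := sep h h0 h1
    rw [abs_sub_comm, abs_of_nonneg (by linarith)]; exact ⟨a, b⟩

lemma pf_injective : Function.Injective pf := by
  intro ω ω' hpf
  by_contra hne
  obtain ⟨n, h, hd⟩ := exists_first_diff hne
  obtain ⟨a, _⟩ := abs_sep h hd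
  rw [hpf] at a; simp at a
  have := LL_pos n; linarith

lemma pf_nonneg (ω : ℕ → Bool) : 0 ≤ pf ω := tsum_nonneg (ite_nonneg ω)
lemma pf_le_one (ω : ℕ → Bool) : pf ω ≤ 1 := by
  have := pf_split ω 0
  have h2 := tl_le 0 ω
  simp [lp] at this
  rw [this]; simpa [LL_zero] using h2

lemma pf_continuous : Continuous pf := by
  apply continuous_tsum (u := uu)
  · intro k
    have h1 : Continuous fun ω : ℕ → Bool => ω k := continuous_apply k
    exact (continuous_of_discreteTopology (α := Bool)
      (f := fun b => if b then uu k else 0)).comp h1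
  · exact summable_uu
  · intro k ω
    rw [Real.norm_eq_abs, abs_of_nonneg (ite_nonneg ω k)]
    exact ite_le ω k

lemma EE_compact : IsCompact EE := isCompact_range pf_continuous
lemma EE_nonempty : EE.Nonempty := ⟨pf (fun _ => false), Set.mem_range_self _⟩
lemma EE_subset : EE ⊆ Set.Icc 0 1 := by
  rintro x ⟨ω, rfl⟩; exact ⟨pf_nonneg ω, pf_le_one ω⟩

/-- nesting of intervals -/
lemma lp_le_lp {m n : ℕ} (h : m ≤ n) (ω : ℕ → Bool) : lp m ω ≤ lp n ω := by
  unfold lp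
  apply Finset.sum_le_sum_of_subset_of_nonneg (Finset.range_subset_range.2 h)
  intro k _ _; exact ite_nonneg ω k

lemma Iv_nested {m n : ℕ} (h : m ≤ n) (ω : ℕ → Bool) : Iv n ω ⊆ Iv m ω := by
  have h2 : lp n ω + LL n ≤ lp m ω + LL m := by
    have : lp n ω - lp m ω ≤ LL m - LL n := by
      unfold lp
      rw [← Finset.sum_Ico_eq_sub _ h]
      calc ∑ k ∈ Finset.Ico m n, (if ω k then uu k else 0)
          ≤ ∑ k ∈ Finset.Ico m n, uu k := Finset.sum_le_sum (fun k _ => ite_le ω k)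
        _ = LL m - LL n := by
            rw [Finset.sum_Ico_eq_sub _ h, sum_uu, sum_uu]; ring
    linarith
  intro x hx
  exact ⟨(lp_le_lp h ω).trans hx.1, hx.2.trans h2⟩


--CHUNK C

lemma mem_Iv_iff {n : ℕ} (ω ω' : ℕ → Bool) : pf ω' ∈ Iv n ω ↔ ω' ∈ cyl n ω := by
  constructor
  · intro hmem
    by_contra hcyl
    simp only [cyl, Set.mem_setOf_eq, not_forall] at hcyl
    obtain ⟨j, hj, hdj⟩ := hcyl
    have hex : ∃ k, ω' k ≠ ω k := ⟨j, hdj⟩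
    set k₀ := Nat.find hex with hk₀
    have hspec : ω' k₀ ≠ ω k₀ := Nat.find_spec hex
    have hk₀n : k₀ < n := lt_of_le_of_lt (Nat.find_le hdj) hj
    have hagree : ∀ k < k₀, ω' k = ω k := by
      intro k hk; by_contra hc; exact absurd (Nat.find_le hc) (not_le.2 hk)
    have hmem' : pf ω' ∈ Iv (k₀+1) ω := Iv_nested hk₀n ω hmem
    have hlpc : lp k₀ ω' = lp k₀ ω := lp_congr hagree
    have hmem'' : pf ω' ∈ Iv (k₀+1) ω' := pf_mem_Iv ω' (k₀+1)
    have hLu := LL_succ_lt_uu k₀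
    rcases Bool.eq_false_or_eq_true (ω k₀) with h0 | h0
    · -- ω k₀ = true, ω' k₀ = false
      have h1 : ω' k₀ = false := by cases hb : ω' k₀ <;> simp_all
      have e1 : lp (k₀+1) ω = lp k₀ ω + uu k₀ := by rw [lp_succ, h0]; simp
      have e2 : lp (k₀+1) ω' = lp k₀ ω := by rw [lp_succ, h1, hlpc]; simp
      have hub : pf ω' ≤ lp k₀ ω + LL (k₀+1) := by
        have := hmem''.2; rw [e2] at this; linarith
      have hlb : lp k₀ ω + uu k₀ ≤ pf ω' := by
        have := hmem'.1; rw [e1] at this; linarith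
      linarith
    · have h1 : ω' k₀ = true := by cases hb : ω' k₀ <;> simp_all
      have e1 : lp (k₀+1) ω = lp k₀ ω := by rw [lp_succ, h0]; simp
      have e2 : lp (k₀+1) ω' = lp k₀ ω + uu k₀ := by rw [lp_succ, h1, hlpc]; simp
      have hub : pf ω' ≤ lp k₀ ω + LL (k₀+1) := by
        have := hmem'.2; rw [e1] at this; linarith
      have hlb : lp k₀ ω + uu k₀ ≤ pf ω' := by
        have := hmem''.1; rw [e2] at this; linarith
      linarith
  · intro hcyl
    have := pf_mem_Iv ω' n
    have h1 : lp n ω' = lp n ω := lp_congr hcyl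
    rwa [Iv, h1] at this

lemma preimage_Iv (n : ℕ) (ω : ℕ → Bool) : pf ⁻¹' (Iv n ω) = cyl n ω := by
  ext ω'; exact mem_Iv_iff ω ω'

lemma cyl_measurable (n : ℕ) (ω : ℕ → Bool) : MeasurableSet (cyl n ω) := by
  have : cyl n ω = ⋂ k ∈ Finset.range n, (fun ω' : ℕ → Bool => ω' k) ⁻¹' {ω k} := by
    ext ω'; simp [cyl]
  rw [this]
  exact MeasurableSet.biInter (Finset.range n).countable_toSet
    (fun k _ => (measurable_pi_apply k) (MeasurableSet.singleton _))


--CHUNK D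

noncomputable def dd (t : ℝ) : ℕ → Bool := fun k => decide (⌊t * 2^(k+1)⌋₊ % 2 = 1)
noncomputable def gmap (i : Bool) (t : ℝ) : ℝ := (t + (if i then 1 else 0)) / 2
noncomputable def Jset (i : Bool) : Set ℝ := if i then Ico (1/2:ℝ) 1 else Ico (0:ℝ) (1/2)
noncomputable def nu : Measure ℝ := volume.restrict (Ico (0:ℝ) 1)
noncomputable def Bm : Measure (ℕ → Bool) := nu.map dd
noncomputable def μμ : Measure ℝ := Bm.map pf

lemma dd_measurable : Measurable dd := by
  apply measurable_pi_lambda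
  intro k
  have m1 : Measurable fun t : ℝ => ⌊t * 2^(k+1)⌋₊ :=
    Nat.measurable_floor.comp ((measurable_id : Measurable fun t : ℝ => t).mul_const ((2:ℝ)^(k+1)))
  exact (Measurable.of_discrete (f := fun n : ℕ => decide (n % 2 = 1))).comp m1

lemma consSeq_measurable (i : Bool) : Measurable (consSeq i) := by
  apply measurable_pi_lambda
  intro n
  rcases n with _ | m
  · exact measurable_const
  · exact measurable_pi_apply m

lemma pf_measurable : Measurable pf := pf_continuous.measurable

lemma gmap_measurable (i : Bool) : Measurable (gmap i) :=
  (measurable_id.add_const _).div_const _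

lemma dd_gmap {t : ℝ} (ht : t ∈ Ico (0:ℝ) 1) (i : Bool) :
    dd (gmap i t) = consSeq i (dd t) := by
  obtain ⟨h0, h1⟩ := ht
  have hfl0 : ⌊t⌋₊ = 0 := Nat.floor_eq_zero.2 h1
  funext k
  rcases k with _ | k
  · cases i
    · show decide (⌊gmap false t * 2^1⌋₊ % 2 = 1) = false
      have h : gmap false t * 2^1 = t := by unfold gmap; norm_num
      rw [h, hfl0]
      decide
    · show decide (⌊gmap true t * 2^1⌋₊ % 2 = 1) = true
      have h : gmap true t * 2^1 = t + 1 := by unfold gmap; norm_num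
      have h2 : ⌊t + 1⌋₊ = 1 := by
        have := Nat.floor_add_one h0 (R := ℝ)
        rw [this, hfl0]
      rw [h, h2]
      decide
  · cases i
    · show decide (⌊gmap false t * 2^(k+2)⌋₊ % 2 = 1) = dd t k
      have h : gmap false t * 2^(k+2) = t * 2^(k+1) := by unfold gmap; norm_num; ring
      rw [h]; rfl
    · show decide (⌊gmap true t * 2^(k+2)⌋₊ % 2 = 1) = dd t k
      have hnn : 0 ≤ t * 2^(k+1) := by positivity
      have h : gmap true t * 2^(k+2) = t * 2^(k+1) + ((2^(k+1) : ℕ) : ℝ) := by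
        unfold gmap; push_cast; norm_num; ring
      rw [h, Nat.floor_add_natCast hnn]
      have h2 : (⌊t * 2^(k+1)⌋₊ + 2^(k+1)) % 2 = ⌊t * 2^(k+1)⌋₊ % 2 := by
        have : 2^(k+1) = 2 * 2^k := by ring
        omega
      rw [h2]; rfl

lemma gmap_preimage (i : Bool) : gmap i ⁻¹' (Jset i) = Ico (0:ℝ) 1 := by
  ext t
  cases i
  · have hJ : Jset false = Ico (0:ℝ) (1/2) := rfl
    have hg : gmap false t = t / 2 := by unfold gmap; norm_num
    rw [mem_preimage, hJ, hg, mem_Ico, mem_Ico]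
    constructor <;> intro ⟨a, b⟩ <;> exact ⟨by linarith, by linarith⟩
  · have hJ : Jset true = Ico (1/2:ℝ) 1 := rfl
    have hg : gmap true t = (t+1) / 2 := by unfold gmap; norm_num
    rw [mem_preimage, hJ, hg, mem_Ico, mem_Ico]
    constructor <;> intro ⟨a, b⟩ <;> exact ⟨by linarith, by linarith⟩

lemma map_gmap_vol (i : Bool) : volume.map (gmap i) = (2 : ℝ≥0∞) • volume := by
  set c : ℝ := (if i then 1 else 0) with hc
  have hg : gmap i = (fun x : ℝ => (2:ℝ)⁻¹ * x) ∘ (fun x : ℝ => x + c) := by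
    funext x; simp only [Function.comp_apply, gmap, hc]; ring
  have hmul : Measurable fun x : ℝ => (2:ℝ)⁻¹ * x := measurable_const_mul _
  have hadd : Measurable fun x : ℝ => x + c := measurable_add_const c
  rw [hg, ← Measure.map_map hmul hadd, Measure.IsAddRightInvariant.map_add_right_eq_self (μ := (volume : Measure ℝ)) c,
    Real.map_volume_mul_left (by norm_num : (2:ℝ)⁻¹ ≠ 0)]
  norm_num

lemma map_gmap_nu (i : Bool) : nu.map (gmap i) = (2 : ℝ≥0∞) • volume.restrict (Jset i) := by
  have hJm : MeasurableSet (Jset i) := by cases i <;> simp [Jset, measurableSet_Ico]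
  have h : nu = volume.restrict (gmap i ⁻¹' (Jset i)) := by rw [gmap_preimage]; rfl
  rw [h, ← Measure.restrict_map (gmap_measurable i) hJm, map_gmap_vol i,
    Measure.restrict_smul]

instance : IsProbabilityMeasure nu := by
  constructor; simp [nu]

instance : IsProbabilityMeasure Bm :=
  Measure.isProbabilityMeasure_map dd_measurable.aemeasurable

instance : IsProbabilityMeasure μμ :=
  Measure.isProbabilityMeasure_map pf_measurable.aemeasurable

lemma Bm_stat : Bm = (1/2 : ℝ≥0∞) • Bm.map (consSeq false) + (1/2 : ℝ≥0∞) • Bm.map (consSeq true) := by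
  have key : ∀ i : Bool, Bm.map (consSeq i) = (2 : ℝ≥0∞) • (volume.restrict (Jset i)).map dd := by
    intro i
    rw [Bm, Measure.map_map (consSeq_measurable i) dd_measurable]
    have hae : (consSeq i ∘ dd) =ᵐ[nu] (dd ∘ gmap i) := by
      have : ∀ᵐ t ∂nu, t ∈ Ico (0:ℝ) 1 := ae_restrict_mem measurableSet_Ico
      filter_upwards [this] with t ht
      simp only [Function.comp_apply]
      rw [dd_gmap ht i]
    rw [Measure.map_congr hae,
      ← Measure.map_map dd_measurable (gmap_measurable i), map_gmap_nu i,
      Measure.map_smul]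
  rw [key false, key true, smul_smul, smul_smul]
  have h2 : (1/2 : ℝ≥0∞) * 2 = 1 := by
    rw [one_div, ENNReal.inv_mul_cancel] <;> norm_num
  have hJf : Jset false = Ico (0:ℝ) (1/2) := rfl
  have hJt' : Jset true = Ico (1/2:ℝ) 1 := rfl
  have hd : Disjoint (Jset false) (Jset true) := by
    rw [hJf, hJt']; exact Set.Ico_disjoint_Ico_same
  have hu : Jset false ∪ Jset true = Ico (0:ℝ) 1 := by
    rw [hJf, hJt']; exact Ico_union_Ico_eq_Ico (by norm_num) (by norm_num)
  have hJt : MeasurableSet (Jset true) := by rw [hJt']; exact measurableSet_Ico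
  rw [h2, one_smul, one_smul, ← Measure.map_add _ _ dd_measurable,
    ← Measure.restrict_union hd hJt, hu]
  rfl

lemma cons_preimage_cyl (i : Bool) (n : ℕ) (ω : ℕ → Bool) :
    (consSeq i) ⁻¹' (cyl (n+1) ω) =
      if i = ω 0 then cyl n (fun k => ω (k+1)) else ∅ := by
  ext ω'
  simp only [mem_preimage, cyl, Set.mem_setOf_eq]
  split
  · next h =>
    simp only [Set.mem_setOf_eq]
    constructor
    · intro hall k hk
      have := hall (k+1) (by omega)
      simpa [consSeq] using this
    · intro hall k hk
      rcases k with _ | m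
      · simpa [consSeq] using h
      · have := hall m (by omega)
        simpa [consSeq] using this
  · next h =>
    simp only [Set.mem_empty_iff_false, iff_false, not_forall]
    exact ⟨0, by omega, by simpa [consSeq] using h⟩

lemma Bm_cyl : ∀ (n : ℕ) (ω : ℕ → Bool), Bm (cyl n ω) = (2 : ℝ≥0∞)⁻¹ ^ n := by
  intro n
  induction n with
  | zero =>
    intro ω
    have : cyl 0 ω = Set.univ := by ext ω'; simp [cyl]
    rw [this, pow_zero]; exact measure_univ
  | succ n ih =>
    intro ω
    have hmap : ∀ i : Bool, (Bm.map (consSeq i)) (cyl (n+1) ω) =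
        Bm ((consSeq i) ⁻¹' (cyl (n+1) ω)) :=
      fun i => Measure.map_apply (consSeq_measurable i) (cyl_measurable _ _)
    have heval : Bm (cyl (n+1) ω) =
        (1/2 : ℝ≥0∞) * Bm ((consSeq false) ⁻¹' (cyl (n+1) ω)) +
        (1/2 : ℝ≥0∞) * Bm ((consSeq true) ⁻¹' (cyl (n+1) ω)) := by
      conv_lhs => rw [Bm_stat]
      rw [Measure.add_apply, Measure.smul_apply, Measure.smul_apply, hmap false, hmap true]
      rfl
    rw [heval, cons_preimage_cyl, cons_preimage_cyl]
    rcases Bool.eq_false_or_eq_true (ω 0) with h0 | h0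
    · rw [if_pos h0.symm, if_neg (by simp [h0]), measure_empty, ih]
      rw [pow_succ, one_div]
      ring
    · rw [if_pos h0.symm, if_neg (by simp [h0]), measure_empty, ih]
      rw [pow_succ, one_div]
      ring


--CHUNK E

noncomputable def psif (x : ℝ) : ℝ := if 0 ≤ x then (1/32) * x else (1/2) * x

lemma psif_slope {p q : ℝ} (h : p ≤ q) :
    (1/32) * (q - p) ≤ psif q - psif p ∧ psif q - psif p ≤ (1/2) * (q - p) := by
  unfold psif
  rcases le_or_gt 0 p with hp | hp <;> rcases le_or_gt 0 q with hq | hq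
  · rw [if_pos hp, if_pos hq]; constructor <;> nlinarith
  · exact absurd (hp.trans h) (not_le.2 hq)
  · rw [if_neg (not_le.2 hp), if_pos hq]; constructor <;> nlinarith
  · rw [if_neg (not_le.2 hp), if_neg (not_le.2 hq)]; constructor <;> nlinarith

noncomputable def extF (F : ℝ → ℝ) (x : ℝ) : ℝ :=
  sSup ((fun e => F e + psif (x - e)) '' EE)

section ext
variable {F : ℝ → ℝ}
  (hFbd : ∀ x ∈ EE, |F x| ≤ 1)

lemma psif_le_abs (t : ℝ) : psif t ≤ (1/2) * |t| := by
  unfold psif; split <;> rcases abs_cases t with ⟨h1, h2⟩ | ⟨h1, h2⟩ <;> nlinarith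

include hFbd in
lemma ext_bdd (x : ℝ) : BddAbove ((fun e => F e + psif (x - e)) '' EE) := by
  refine ⟨1 + (1/2) * (|x| + 1), ?_⟩
  rintro a ⟨e, he, rfl⟩
  have h1 := hFbd e he
  have h2 : |e| ≤ 1 := by
    obtain ⟨a1, a2⟩ := EE_subset he; rw [abs_le]; constructor <;> linarith
  have h3 : psif (x - e) ≤ (1/2) * |x - e| := psif_le_abs _
  have h4 : |x - e| ≤ |x| + 1 := (abs_sub _ _).trans (by linarith)
  have := abs_le.1 h1
  simp only []
  nlinarith

include hFbd in
lemma ext_slope {x y : ℝ} (hxy : x < y) :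
    (1/32) * (y - x) ≤ extF F y - extF F x ∧ extF F y - extF F x ≤ (1/2) * (y - x) := by
  obtain ⟨x₀, hx₀⟩ := EE_nonempty
  have hne : ∀ z : ℝ, ((fun e => F e + psif (z - e)) '' EE).Nonempty :=
    fun z => ⟨_, ⟨x₀, hx₀, rfl⟩⟩
  constructor
  · have : extF F x ≤ extF F y - (1/32) * (y - x) := by
      apply csSup_le (hne x)
      rintro a ⟨e, he, rfl⟩
      have hs := (psif_slope (by linarith : x - e ≤ y - e)).1
      have hle : F e + psif (y - e) ≤ extF F y := le_csSup (ext_bdd hFbd y) ⟨e, he, rfl⟩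
      have : (y - e) - (x - e) = y - x := by ring
      rw [this] at hs
      linarith
    linarith
  · have : extF F y ≤ extF F x + (1/2) * (y - x) := by
      apply csSup_le (hne y)
      rintro a ⟨e, he, rfl⟩
      have hs := (psif_slope (by linarith : x - e ≤ y - e)).2
      have hle : F e + psif (x - e) ≤ extF F x := le_csSup (ext_bdd hFbd x) ⟨e, he, rfl⟩
      have : (y - e) - (x - e) = y - x := by ring
      rw [this] at hs
      linarith
    linarith

include hFbd in
lemma ext_agree (hF : ∀ x ∈ EE, ∀ y ∈ EE, x < y →
      (1/32) * (y - x) ≤ F y - F x ∧ F y - F x ≤ (1/2) * (y - x))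
    {x : ℝ} (hx : x ∈ EE) : extF F x = F x := by
  have hp0 : psif 0 = 0 := by unfold psif; simp
  apply le_antisymm
  · apply csSup_le (EE_nonempty.image _)
    rintro a ⟨e, he, rfl⟩
    rcases lt_trichotomy e x with h | h | h
    · have := (hF e he x hx h).1
      have hp : psif (x - e) = (1/32) * (x - e) := if_pos (by linarith)
      simp only [hp]; nlinarith
    · subst h
      show F e + psif (e - e) ≤ F e
      rw [sub_self, hp0, add_zero]
    · have := (hF x hx e he h).2
      have hp : psif (x - e) = (1/2) * (x - e) := if_neg (by simp; linarith)
      simp only [hp]; nlinarith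
  · have hmem : F x + psif (x - x) ∈ (fun e => F e + psif (x - e)) '' EE := ⟨x, hx, rfl⟩
    have h := le_csSup (ext_bdd hFbd x) hmem
    rw [sub_self, hp0, add_zero] at h
    exact h

end ext

noncomputable def F0 (i : Bool) (x : ℝ) : ℝ := pf (consSeq i (Function.invFun pf x))
noncomputable def phi (i : Bool) : ℝ → ℝ := extF (F0 i)

lemma cons_agree {n : ℕ} {ω ω' : ℕ → Bool} (h : ∀ k < n, ω k = ω' k) (i : Bool) :
    ∀ k < n + 1, consSeq i ω k = consSeq i ω' k := by
  intro k hk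
  rcases k with _ | m
  · rfl
  · simpa [consSeq] using h m (by omega)

lemma F0_mem {x : ℝ} (hx : x ∈ EE) (i : Bool) : F0 i x ∈ EE := ⟨_, rfl⟩

lemma F0_pf (i : Bool) (ω : ℕ → Bool) : F0 i (pf ω) = pf (consSeq i ω) := by
  unfold F0
  rw [Function.leftInverse_invFun pf_injective ω]

lemma F0_slope (i : Bool) : ∀ x ∈ EE, ∀ y ∈ EE, x < y →
    (1/32) * (y - x) ≤ F0 i y - F0 i x ∧ F0 i y - F0 i x ≤ (1/2) * (y - x) := by
  rintro x ⟨ω, rfl⟩ y ⟨ω', rfl⟩ hxy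
  rw [F0_pf, F0_pf]
  have hne : ω ≠ ω' := fun h => absurd (congrArg pf h) (ne_of_lt hxy)
  obtain ⟨n, hagree, hdiff⟩ := exists_first_diff hne
  have hL := LL_pos n
  have hL1 := LL_succ_le n
  have hL2 := LL_succ_ge n
  rcases Bool.eq_false_or_eq_true (ω n) with h0 | h0
  · -- ω n = true : pf ω > pf ω', contradiction with x < y
    have h1 : ω' n = false := by cases hb : ω' n <;> simp_all
    obtain ⟨a, b⟩ := sep (fun k hk => (hagree k hk).symm) h1 h0
    linarith
  · have h1 : ω' n = true := by cases hb : ω' n <;> simp_all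
    obtain ⟨a, b⟩ := sep hagree h0 h1
    have h0' : consSeq i ω (n+1) = false := by simpa [consSeq] using h0
    have h1' : consSeq i ω' (n+1) = true := by simpa [consSeq] using h1
    obtain ⟨c, d⟩ := sep (cons_agree hagree i) h0' h1'
    constructor <;> nlinarith

lemma F0_bd (i : Bool) : ∀ x ∈ EE, |F0 i x| ≤ 1 := by
  intro x hx
  obtain ⟨ω, hω⟩ := F0_mem hx i
  rw [← hω, abs_le]
  exact ⟨by linarith [pf_nonneg ω], pf_le_one ω⟩

lemma phi_pf (i : Bool) (ω : ℕ → Bool) : phi i (pf ω) = pf (consSeq i ω) := by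
  unfold phi
  rw [ext_agree (F0_bd i) (F0_slope i) ⟨ω, rfl⟩, F0_pf]

lemma phi_biLip (i : Bool) (x y : ℝ) :
    (1/32) * |x - y| ≤ |phi i x - phi i y| ∧ |phi i x - phi i y| ≤ (1/2) * |x - y| := by
  unfold phi
  rcases lt_trichotomy x y with h | h | h
  · obtain ⟨a, b⟩ := ext_slope (F := F0 i) (F0_bd i) h
    rw [abs_sub_comm x y, abs_sub_comm (extF (F0 i) x) (extF (F0 i) y),
      abs_of_nonneg (by linarith : (0:ℝ) ≤ y - x), abs_of_nonneg (by nlinarith : (0:ℝ) ≤ extF (F0 i) y - extF (F0 i) x)]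
    exact ⟨a, b⟩
  · subst h; simp
  · obtain ⟨a, b⟩ := ext_slope (F := F0 i) (F0_bd i) h
    rw [abs_of_nonneg (by linarith : (0:ℝ) ≤ x - y),
      abs_of_nonneg (by nlinarith : (0:ℝ) ≤ extF (F0 i) x - extF (F0 i) y)]
    exact ⟨a, b⟩

lemma phi_lipschitz (i : Bool) : LipschitzWith (1/2 : ℝ≥0) (phi i) := by
  apply LipschitzWith.of_dist_le_mul
  intro x y
  have := (phi_biLip i x y).2
  rw [Real.dist_eq, Real.dist_eq]
  simpa using this

lemma phi_continuous (i : Bool) : Continuous (phi i) := (phi_lipschitz i).continuous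
lemma phi_measurable (i : Bool) : Measurable (phi i) := (phi_continuous i).measurable

lemma attractor : EE = phi false '' EE ∪ phi true '' EE := by
  apply Set.Subset.antisymm
  · rintro x ⟨ω, rfl⟩
    have hdec : ω = consSeq (ω 0) (fun n => ω (n+1)) := by
      funext n; rcases n with _ | m <;> simp [consSeq]
    rcases Bool.eq_false_or_eq_true (ω 0) with h0 | h0
    · right
      refine ⟨pf (fun n => ω (n+1)), ⟨_, rfl⟩, ?_⟩
      rw [phi_pf, ← h0, ← hdec]
    · left
      refine ⟨pf (fun n => ω (n+1)), ⟨_, rfl⟩, ?_⟩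
      rw [phi_pf, ← h0, ← hdec]
  · rintro x (⟨y, ⟨ω, rfl⟩, rfl⟩ | ⟨y, ⟨ω, rfl⟩, rfl⟩) <;> rw [phi_pf] <;> exact ⟨_, rfl⟩


--CHUNK F

lemma Iv_measurable (n : ℕ) (ω : ℕ → Bool) : MeasurableSet (Iv n ω) := measurableSet_Icc

lemma μμ_Iv (n : ℕ) (ω : ℕ → Bool) : μμ (Iv n ω) = (2 : ℝ≥0∞)⁻¹ ^ n := by
  rw [μμ, Measure.map_apply pf_measurable (Iv_measurable n ω), preimage_Iv, Bm_cyl]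

lemma μμ_compl : μμ EEᶜ = 0 := by
  rw [μμ, Measure.map_apply pf_measurable]
  · have : pf ⁻¹' EEᶜ = ∅ := by
      ext ω; simp [EE, Set.mem_range]
    simp [this]
  · exact EE_compact.isClosed.measurableSet.compl

lemma mu_stat {φ0 φ1 : ℝ → ℝ} (h0m : Measurable φ0) (h1m : Measurable φ1)
    (h0 : ∀ ω, φ0 (pf ω) = pf (consSeq false ω)) (h1 : ∀ ω, φ1 (pf ω) = pf (consSeq true ω)) :
    μμ = (1/2 : ℝ≥0∞) • μμ.map φ0 + (1/2 : ℝ≥0∞) • μμ.map φ1 := by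
  have key : ∀ (φ : ℝ → ℝ) (i : Bool), Measurable φ →
      (∀ ω, φ (pf ω) = pf (consSeq i ω)) → μμ.map φ = (Bm.map (consSeq i)).map pf := by
    intro φ i hm hφ
    rw [μμ, Measure.map_map hm pf_measurable,
      Measure.map_map pf_measurable (consSeq_measurable i)]
    congr 1
    funext ω
    exact hφ ω
  rw [key φ0 false h0m h0, key φ1 true h1m h1]
  conv_lhs => rw [μμ, Bm_stat]
  rw [Measure.map_add _ _ pf_measurable, Measure.map_smul, Measure.map_smul]

/-- the word extension -/
def wex (n : ℕ) (w : Fin n → Bool) : ℕ → Bool := fun k => if h : k < n then w ⟨k, h⟩ else false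

lemma cover_mem {n : ℕ} {δ : ℝ} (h : LL n ≤ δ) :
    2^n ∈ {m : ℕ | ∃ c : Fin m → ℝ, EE ⊆ ⋃ i, Metric.closedBall (c i) (δ / 2)} := by
  have hcard : Fintype.card (Fin n → Bool) = 2^n := by simp
  let e : (Fin n → Bool) ≃ Fin (2^n) := Fintype.equivFinOfCardEq hcard
  refine ⟨fun j => lp n (wex n (e.symm j)) + LL n / 2, ?_⟩
  rintro x ⟨ω, rfl⟩
  have hmem := pf_mem_Iv ω n
  refine Set.mem_iUnion.2 ⟨e (fun k : Fin n => ω k), ?_⟩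
  rw [mem_closedBall, Real.dist_eq]
  have hlp : lp n (wex n (fun k : Fin n => ω k)) = lp n ω := by
    apply lp_congr
    intro k hk
    simp [wex, hk]
  simp only [Equiv.symm_apply_apply]
  rw [hlp]
  obtain ⟨a, b⟩ := hmem
  rw [abs_le]
  constructor <;> [linarith; linarith]

lemma cover_le {n : ℕ} {δ : ℝ} (h : LL n ≤ δ) : coverNum EE δ ≤ 2^n :=
  Nat.sInf_le (cover_mem h)

lemma first_diff_lt {n : ℕ} {w w' : Fin n → Bool} (hne : w ≠ w') :
    ∃ k₀, k₀ < n ∧ (∀ k < k₀, wex n w k = wex n w' k) ∧ wex n w k₀ ≠ wex n w' k₀ := by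
  have hne' : wex n w ≠ wex n w' := by
    intro hc
    apply hne
    funext k
    have := congrFun hc k.1
    simpa [wex, k.2] using this
  obtain ⟨k₀, h1, h2⟩ := exists_first_diff hne'
  refine ⟨k₀, ?_, h1, h2⟩
  by_contra hk
  push_neg at hk
  apply h2
  show (if h : k₀ < n then w ⟨k₀, h⟩ else false) = if h : k₀ < n then w' ⟨k₀, h⟩ else false
  rw [dif_neg (by omega : ¬ k₀ < n), dif_neg (by omega : ¬ k₀ < n)]

lemma cover_ge {n : ℕ} {δ : ℝ} (hδ : 0 < δ) (h : δ < LL n / 2) : 2^n ≤ coverNum EE δ := by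
  -- nonemptiness of the covering set
  obtain ⟨m₀, hm₀⟩ : ∃ m₀ : ℕ, LL m₀ ≤ δ := by
    obtain ⟨m₀, hm₀⟩ := exists_pow_lt_of_lt_one hδ (by norm_num : (1/4 : ℝ) < 1)
    exact ⟨m₀, (LL_le_pow m₀).trans hm₀.le⟩
  have hSne : {m : ℕ | ∃ c : Fin m → ℝ, EE ⊆ ⋃ i, Metric.closedBall (c i) (δ / 2)}.Nonempty :=
    ⟨2^m₀, cover_mem hm₀⟩
  have hmem := Nat.sInf_mem hSne
  obtain ⟨c, hc⟩ := hmem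
  set N := coverNum EE δ with hN
  have hpt : ∀ w : Fin n → Bool, ∃ i : Fin N, pf (wex n w) ∈ Metric.closedBall (c i) (δ/2) := by
    intro w
    have := hc ⟨wex n w, rfl⟩
    exact Set.mem_iUnion.1 this
  choose f hf using hpt
  have hinj : Function.Injective f := by
    intro w w' hfw
    by_contra hne
    obtain ⟨k₀, hk₀n, hagree, hdiff⟩ := first_diff_lt hne
    have hd1 := hf w
    have hd2 := hf w'
    rw [hfw] at hd1
    have hdist : |pf (wex n w) - pf (wex n w')| ≤ δ := by
      rw [mem_closedBall] at hd1 hd2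
      have h3 := dist_triangle (pf (wex n w)) (c (f w')) (pf (wex n w'))
      have h4 : dist (c (f w')) (pf (wex n w')) ≤ δ/2 := by
        rw [dist_comm]; exact hd2
      rw [← Real.dist_eq]
      linarith
    obtain ⟨hlow, _⟩ := abs_sep hagree hdiff
    have hLL : LL n ≤ LL k₀ := (LL_anti hk₀n).le
    linarith
  calc 2^n = Fintype.card (Fin n → Bool) := by simp
    _ ≤ Fintype.card (Fin N) := Fintype.card_le_of_injective f hinj
    _ = N := by simp

lemma ball_ge (ω : ℕ → Bool) {n : ℕ} {δ : ℝ} (h : LL n ≤ δ) :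
    (2:ℝ≥0∞)⁻¹^n ≤ μμ (Metric.closedBall (pf ω) δ) := by
  rw [← μμ_Iv n ω]
  apply measure_mono
  intro z hz
  obtain ⟨a, b⟩ := hz
  obtain ⟨a', b'⟩ := pf_mem_Iv ω n
  rw [mem_closedBall, Real.dist_eq, abs_le]
  constructor <;> linarith

lemma ball_le (ω : ℕ → Bool) {n : ℕ} {δ : ℝ} (h : δ < LL n / 2) :
    μμ (Metric.closedBall (pf ω) δ) ≤ (2:ℝ≥0∞)⁻¹^n := by
  have hsub : Metric.closedBall (pf ω) δ ⊆ Iv n ω ∪ EEᶜ := by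
    intro y hy
    by_cases hyE : y ∈ EE
    · obtain ⟨ω', rfl⟩ := hyE
      left
      rw [mem_Iv_iff]
      intro k hk
      by_contra hd
      have hne : ω' ≠ ω := fun hc => hd (congrFun hc k)
      obtain ⟨m, hag, hdm⟩ := exists_first_diff hne
      have hmk : m ≤ k := by
        by_contra hmk
        exact hd (hag k (by omega))
      obtain ⟨hlow, _⟩ := abs_sep hag hdm
      have hLL : LL n ≤ LL m := by
        rcases eq_or_lt_of_le (hmk.trans hk.le) with he | hl
        · rw [he]
        · exact (LL_anti hl).le
      rw [mem_closedBall, Real.dist_eq, abs_sub_comm] at hy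
      rw [abs_sub_comm] at hlow
      linarith
    · right; exact hyE
  calc μμ (Metric.closedBall (pf ω) δ) ≤ μμ (Iv n ω ∪ EEᶜ) := measure_mono hsub
    _ ≤ μμ (Iv n ω) + μμ EEᶜ := measure_union_le _ _
    _ = (2:ℝ≥0∞)⁻¹^n := by rw [μμ_Iv, μμ_compl, add_zero]

lemma toReal_pow_inv (k : ℕ) : ((2:ℝ≥0∞)⁻¹^k).toReal = (1/2 : ℝ)^k := by
  rw [ENNReal.toReal_pow, ENNReal.toReal_inv]
  norm_num

lemma ball_sandwich (ω : ℕ → Bool) {n : ℕ} {δ : ℝ} (h1 : LL (n+2) ≤ δ) (h2 : δ < LL n / 2) :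
    0 < (μμ (Metric.closedBall (pf ω) δ)).toReal ∧
    (2:ℝ)^n ≤ ((μμ (Metric.closedBall (pf ω) δ)).toReal)⁻¹ ∧
    ((μμ (Metric.closedBall (pf ω) δ)).toReal)⁻¹ ≤ 2^(n+2) := by
  set m := μμ (Metric.closedBall (pf ω) δ) with hm
  have hub := ball_le ω h2
  have hlb := ball_ge ω h1
  have hfin : m ≠ ⊤ := measure_ne_top _ _
  have hub' : m.toReal ≤ (1/2 : ℝ)^n := by
    rw [← toReal_pow_inv n]
    exact ENNReal.toReal_mono (by simp) hub
  have hlb' : (1/2 : ℝ)^(n+2) ≤ m.toReal := by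
    rw [← toReal_pow_inv (n+2)]
    exact ENNReal.toReal_mono hfin hlb
  have hpos : 0 < m.toReal := lt_of_lt_of_le (by positivity) hlb'
  refine ⟨hpos, ?_, ?_⟩
  · have : (2:ℝ)^n = ((1/2 : ℝ)^n)⁻¹ := by
      rw [one_div, inv_pow, inv_inv]
    rw [this]
    exact inv_anti₀ hpos hub'
  · have : (2:ℝ)^(n+2) = ((1/2 : ℝ)^(n+2))⁻¹ := by
      rw [one_div, inv_pow, inv_inv]
    rw [this]
    exact inv_anti₀ (by positivity) hlb'

lemma cover_sandwich {n : ℕ} {δ : ℝ} (h1 : LL (n+2) ≤ δ) (h2 : δ < LL n / 2) :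
    (2:ℝ)^n ≤ (coverNum EE δ : ℝ) ∧ (coverNum EE δ : ℝ) ≤ 2^(n+2) := by
  have hδ : 0 < δ := lt_of_lt_of_le (LL_pos (n+2)) h1
  constructor
  · exact_mod_cast cover_ge hδ h2
  · have h3 : δ < LL (n+2) / 2 → False := fun hc => by
      have := LL_pos (n+2); linarith
    exact_mod_cast cover_le h1


--CHUNK H

lemma hs_nonneg (n : ℕ) : 0 ≤ hs n := by unfold hs; positivity

lemma hs_le_half (n : ℕ) : hs n ≤ 1/2 := by
  rcases Nat.eq_zero_or_pos n with h | h
  · subst h; unfold hs; norm_num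
  · have h1 : (1:ℝ) ≤ (n:ℝ) := by exact_mod_cast h
    have h2 : (0:ℝ) ≤ (sfn n : ℝ) := Nat.cast_nonneg _
    unfold hs
    rw [div_le_iff₀ (by linarith)]
    linarith

lemma hs_ge_quarter {n : ℕ} (hn : 1 ≤ n) : 1/4 ≤ hs n := by
  have h1 : (1:ℝ) ≤ (n:ℝ) := by exact_mod_cast hn
  have h3 : (sfn n : ℝ) ≤ (n:ℝ) := by exact_mod_cast sfn_le n
  unfold hs
  rw [le_div_iff₀ (by linarith)]
  linarith

lemma exists_LL_le {δ : ℝ} (hδ : 0 < δ) : ∃ m, LL m / 2 ≤ δ := by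
  obtain ⟨m, hm⟩ := exists_pow_lt_of_lt_one hδ (by norm_num : (1/4 : ℝ) < 1)
  exact ⟨m, by have := LL_le_pow m; linarith⟩

noncomputable def nd (δ : ℝ) : ℕ :=
  if h : 0 < δ then Nat.find (exists_LL_le h) - 1 else 0

lemma nd_spec {δ : ℝ} (h0 : 0 < δ) (h1 : δ < 1/2) :
    δ < LL (nd δ) / 2 ∧ LL (nd δ + 1) / 2 ≤ δ := by
  rw [nd, dif_pos h0]
  have hfind := Nat.find_spec (exists_LL_le h0)
  have hne : Nat.find (exists_LL_le h0) ≠ 0 := by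
    intro hc
    rw [hc, LL_zero] at hfind
    linarith
  set F := Nat.find (exists_LL_le h0) with hF
  have hFpos : 1 ≤ F := Nat.one_le_iff_ne_zero.2 hne
  constructor
  · have := Nat.find_min (exists_LL_le h0) (by omega : F - 1 < F)
    push_neg at this
    exact this
  · rw [show F - 1 + 1 = F by omega]
    exact hfind

lemma nd_ge {δ : ℝ} {m : ℕ} (h0 : 0 < δ) (h : δ < LL m / 2) : m ≤ nd δ := by
  rw [nd, dif_pos h0]
  have hlt : m < Nat.find (exists_LL_le h0) := by
    rw [Nat.lt_find_iff]
    intro j hj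
    push_neg
    have hLL : LL m ≤ LL j := by
      rcases eq_or_lt_of_le hj with he | hl
      · rw [he]
      · exact (LL_anti hl).le
    linarith
  omega

lemma nd_tendsto : Tendsto nd (𝓝[>] (0:ℝ)) atTop := by
  rw [Filter.tendsto_atTop]
  intro m
  have hmem : Ioo (0:ℝ) (LL m / 2) ∈ 𝓝[>] (0:ℝ) :=
    Ioo_mem_nhdsGT_of_mem ⟨le_refl 0, by have := LL_pos m; linarith⟩
  filter_upwards [hmem] with δ hδ
  exact nd_ge hδ.1 hδ.2

noncomputable def dk (k : ℕ) : ℝ := LL (k+1) / 2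

lemma dk_pos (k : ℕ) : 0 < dk k := by unfold dk; have := LL_pos (k+1); linarith

lemma dk_tendsto : Tendsto dk atTop (𝓝[>] (0:ℝ)) := by
  apply tendsto_nhdsWithin_of_tendsto_nhds_of_eventually_within
  · have h1 : Tendsto (fun k : ℕ => LL (k+1)) atTop (𝓝 0) :=
      LL_tendsto.comp (tendsto_add_atTop_nat 1)
    have h2 := h1.div_const 2
    rw [zero_div] at h2
    exact h2
  · exact Eventually.of_forall (fun k => dk_pos k)

lemma dk_sandwich (k : ℕ) : LL (k+2) ≤ dk k ∧ dk k < LL k / 2 := by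
  constructor
  · have h1 := LL_succ_le (k+1)
    have h2 := LL_pos (k+1)
    unfold dk; linarith
  · have := LL_anti (by omega : k < k + 1)
    unfold dk; linarith

/-- The log/sandwich bridge. -/
lemma logbridge {n : ℕ} (hn : 1 ≤ n) {δ V : ℝ}
    (h1 : LL (n+2) ≤ δ) (h2 : δ < LL n / 2)
    (hV1 : (2:ℝ)^n ≤ V) (hV2 : V ≤ 2^(n+2)) :
    hs n - 2/(n:ℝ) ≤ Real.log V / (-Real.log δ) ∧
    Real.log V / (-Real.log δ) ≤ hs n + 1/(n:ℝ) := by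
  have hlog2 : 0 < Real.log 2 := Real.log_pos (by norm_num)
  have hδpos : 0 < δ := lt_of_lt_of_le (LL_pos (n+2)) h1
  have hVpos : (0:ℝ) < V := lt_of_lt_of_le (by positivity) hV1
  have hN : (1:ℝ) ≤ (n:ℝ) := by exact_mod_cast hn
  have hsc : (0:ℝ) ≤ (sfn n : ℝ) := Nat.cast_nonneg _
  set N := (n:ℝ) with hNdef
  set s := (sfn n : ℝ) with hsdef
  set a := 2 * (N + s) with ha
  have hage : 2 * N ≤ a := by rw [ha]; linarith
  have hapos : 0 < a := by rw [ha]; linarith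
  have hhs : hs n = N / a := rfl
  have hlogV1 : N * Real.log 2 ≤ Real.log V := by
    have h := Real.log_le_log (by positivity) hV1
    rwa [Real.log_pow] at h
  have hlogV2 : Real.log V ≤ (N + 2) * Real.log 2 := by
    have h := Real.log_le_log hVpos hV2
    rw [Real.log_pow] at h
    push_cast at h
    linarith
  set A := -Real.log δ with hA
  have hA1 : a * Real.log 2 ≤ A := by
    have hlt : δ ≤ LL n := by have := LL_pos n; linarith
    have h := Real.log_le_log hδpos hlt
    have h' := log_LL n
    rw [hA, ha]
    nlinarith [h', h]
  have hA2 : A ≤ (a + 8) * Real.log 2 := by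
    have h := Real.log_le_log (LL_pos (n+2)) h1
    have h' := log_LL (n+2)
    have hsfn : (sfn (n+2) : ℝ) ≤ s + 2 := by
      have := sfn_add_le n 2
      rw [hsdef]
      exact_mod_cast this
    have hcast : ((n+2 : ℕ) : ℝ) = N + 2 := by rw [hNdef]; push_cast; ring
    rw [hcast] at h'
    rw [hA, ha]
    nlinarith [h', h]
  have hApos : 0 < A := lt_of_lt_of_le (by positivity) hA1
  have hlogVnn : 0 ≤ Real.log V := le_trans (by positivity) hlogV1
  constructor
  · have step1 : N / (a + 8) ≤ Real.log V / A := by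
      rw [div_le_div_iff₀ (by linarith) hApos]
      calc N * A ≤ N * ((a+8) * Real.log 2) :=
            mul_le_mul_of_nonneg_left hA2 (by linarith)
        _ = (N * Real.log 2) * (a+8) := by ring
        _ ≤ Real.log V * (a+8) := mul_le_mul_of_nonneg_right hlogV1 (by linarith)
    have step2 : hs n - 2/N ≤ N / (a + 8) := by
      rw [hhs, div_sub_div _ _ (ne_of_gt hapos) (by linarith : N ≠ 0),
        div_le_div_iff₀ (by positivity) (by linarith)]
      have hsq : 4*N*N ≤ a*a := by nlinarith [hage, hN]
      nlinarith [hsq, hapos]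
    linarith
  · have step1 : Real.log V / A ≤ (N + 2) / a := by
      rw [div_le_div_iff₀ hApos hapos]
      calc Real.log V * a ≤ ((N+2) * Real.log 2) * a :=
            mul_le_mul_of_nonneg_right hlogV2 (by linarith)
        _ = (N+2) * (a * Real.log 2) := by ring
        _ ≤ (N+2) * A := mul_le_mul_of_nonneg_left hA1 (by linarith)
    have step2 : (N + 2) / a ≤ hs n + 1/N := by
      rw [hhs, div_add_div _ _ (ne_of_gt hapos) (by linarith : N ≠ 0),
        div_le_div_iff₀ hapos (by positivity)]
      nlinarith [hage, hapos, hN]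
    linarith

section master
variable {g : ℝ → ℝ}
  (HS : ∀ n : ℕ, 1 ≤ n → ∀ δ : ℝ, LL (n+2) ≤ δ → δ < LL n / 2 →
    hs n - 2/(n:ℝ) ≤ g δ ∧ g δ ≤ hs n + 1/(n:ℝ))

include HS in
lemma event_nd : ∀ᶠ δ in 𝓝[>] (0:ℝ),
    1 ≤ nd δ ∧ hs (nd δ) - 2/(nd δ : ℝ) ≤ g δ ∧ g δ ≤ hs (nd δ) + 1/(nd δ : ℝ) := by
  have hL1 : LL 1 / 2 ≤ 1/2 := by have := LL_le_one 1; linarith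
  have hmem : Ioo (0:ℝ) (LL 1 / 2) ∈ 𝓝[>] (0:ℝ) :=
    Ioo_mem_nhdsGT_of_mem ⟨le_refl 0, by have := LL_pos 1; linarith⟩
  filter_upwards [hmem] with δ hδ
  have h0 : 0 < δ := hδ.1
  have hδhalf : δ < 1/2 := lt_of_lt_of_le hδ.2 hL1
  obtain ⟨hlt, hge⟩ := nd_spec h0 hδhalf
  have h1 : 1 ≤ nd δ := nd_ge h0 hδ.2
  have hLL2 : LL (nd δ + 2) ≤ δ := by
    have := LL_succ_le (nd δ + 1)
    have := LL_pos (nd δ + 1)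
    linarith
  exact ⟨h1, HS (nd δ) h1 δ hLL2 hlt⟩

include HS in
lemma event_g_bounds : ∀ᶠ δ in 𝓝[>] (0:ℝ), -2 ≤ g δ ∧ g δ ≤ 3/2 := by
  filter_upwards [event_nd HS] with δ hδ
  obtain ⟨h1, h2, h3⟩ := hδ
  have hnd1 : (1:ℝ) ≤ (nd δ : ℝ) := by exact_mod_cast h1
  have hq := hs_ge_quarter h1
  have hh := hs_le_half (nd δ)
  have e1 : 2/(nd δ : ℝ) ≤ 2 := by
    rw [div_le_iff₀ (by linarith)]; linarith
  have e2 : 1/(nd δ : ℝ) ≤ 1 := by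
    rw [div_le_iff₀ (by linarith)]; linarith
  constructor <;> linarith

lemma hs_bdd_le : IsBoundedUnder (· ≤ ·) atTop hs :=
  ⟨1/2, eventually_map.2 (Eventually.of_forall hs_le_half)⟩
lemma hs_bdd_ge : IsBoundedUnder (· ≥ ·) atTop hs :=
  ⟨0, eventually_map.2 (Eventually.of_forall hs_nonneg)⟩

include HS in
lemma g_bdd_le : IsBoundedUnder (· ≤ ·) (𝓝[>] (0:ℝ)) g :=
  ⟨3/2, eventually_map.2 ((event_g_bounds HS).mono fun _ h => h.2)⟩
include HS in
lemma g_bdd_ge : IsBoundedUnder (· ≥ ·) (𝓝[>] (0:ℝ)) g :=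
  ⟨-2, eventually_map.2 ((event_g_bounds HS).mono fun _ h => h.1)⟩

lemma one_div_le_two_div {x : ℝ} (hx : 1 ≤ x) : 1/x ≤ 2/x := by
  rw [div_le_div_iff₀ (by linarith) (by linarith)]
  linarith

lemma inv_nat_small {ε : ℝ} (hε : 0 < ε) : ∀ᶠ n : ℕ in atTop, 2/(n:ℝ) < ε := by
  have h := tendsto_const_div_atTop_nhds_zero_nat (2:ℝ)
  exact h.eventually_lt_const hε

include HS in
lemma master_liminf : liminf g (𝓝[>] (0:ℝ)) = liminf hs atTop := by
  apply le_antisymm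
  · apply le_of_forall_pos_le_add
    intro ε hε
    have hfr : ∃ᶠ n in atTop, hs n < liminf hs atTop + ε/2 :=
      frequently_lt_of_liminf_lt (hs_bdd_le.isCoboundedUnder_ge) (by linarith)
    have hev : ∀ᶠ n : ℕ in atTop, 1 ≤ n ∧ 2/(n:ℝ) < ε/2 :=
      (eventually_ge_atTop 1).and (inv_nat_small (by linarith))
    have hfr2 : ∃ᶠ k in atTop, g (dk k) ≤ liminf hs atTop + ε := by
      apply (hfr.and_eventually hev).mono
      rintro k ⟨hk1, hk2, hk3⟩
      obtain ⟨hd1, hd2⟩ := dk_sandwich k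
      have := (HS k hk2 (dk k) hd1 hd2).2
      have h1k : 1/(k:ℝ) ≤ 2/(k:ℝ) := one_div_le_two_div (by exact_mod_cast hk2)
      linarith
    have hfreqδ : ∃ᶠ δ in 𝓝[>] (0:ℝ), g δ ≤ liminf hs atTop + ε :=
      dk_tendsto.frequently hfr2
    exact liminf_le_of_frequently_le hfreqδ (g_bdd_ge HS)
  · apply le_of_forall_pos_le_add
    intro ε hε
    have hsev : ∀ᶠ n in atTop, liminf hs atTop - ε/2 < hs n :=
      eventually_lt_of_lt_liminf (by linarith) hs_bdd_ge
    have hev : ∀ᶠ n : ℕ in atTop, (liminf hs atTop - ε/2 < hs n) ∧ 2/(n:ℝ) < ε/2 :=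
      hsev.and (inv_nat_small (by linarith))
    have hevδ : ∀ᶠ δ in 𝓝[>] (0:ℝ),
        (liminf hs atTop - ε/2 < hs (nd δ)) ∧ 2/(nd δ : ℝ) < ε/2 :=
      nd_tendsto.eventually hev
    have hfinal : ∀ᶠ δ in 𝓝[>] (0:ℝ), liminf hs atTop - ε ≤ g δ := by
      filter_upwards [hevδ, event_nd HS] with δ h1 h2
      obtain ⟨ha, hb⟩ := h1
      obtain ⟨hc, hd, he⟩ := h2
      linarith
    have := le_liminf_of_le ((g_bdd_le HS).isCoboundedUnder_ge) hfinal
    linarith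

include HS in
lemma master_limsup : limsup g (𝓝[>] (0:ℝ)) = limsup hs atTop := by
  apply le_antisymm
  · apply le_of_forall_pos_le_add
    intro ε hε
    have hsev : ∀ᶠ n in atTop, hs n < limsup hs atTop + ε/2 :=
      eventually_lt_of_limsup_lt (by linarith) hs_bdd_le
    have hev : ∀ᶠ n : ℕ in atTop, (hs n < limsup hs atTop + ε/2) ∧ 2/(n:ℝ) < ε/2 :=
      hsev.and (inv_nat_small (by linarith))
    have hevδ : ∀ᶠ δ in 𝓝[>] (0:ℝ),
        (hs (nd δ) < limsup hs atTop + ε/2) ∧ 2/(nd δ : ℝ) < ε/2 :=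
      nd_tendsto.eventually hev
    have hfinal : ∀ᶠ δ in 𝓝[>] (0:ℝ), g δ ≤ limsup hs atTop + ε := by
      filter_upwards [hevδ, event_nd HS] with δ h1 h2
      obtain ⟨ha, hb⟩ := h1
      obtain ⟨hc, hd, he⟩ := h2
      have hnd1 : (1:ℝ) ≤ (nd δ : ℝ) := by exact_mod_cast hc
      have h1k : 1/(nd δ:ℝ) ≤ 2/(nd δ:ℝ) := one_div_le_two_div hnd1
      linarith
    have := limsup_le_of_le ((g_bdd_ge HS).isCoboundedUnder_le) hfinal
    linarith
  · apply le_of_forall_pos_le_add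
    intro ε hε
    have hfr : ∃ᶠ n in atTop, limsup hs atTop - ε/2 < hs n :=
      frequently_lt_of_lt_limsup (hs_bdd_ge.isCoboundedUnder_le) (by linarith)
    have hev : ∀ᶠ n : ℕ in atTop, 1 ≤ n ∧ 2/(n:ℝ) < ε/2 :=
      (eventually_ge_atTop 1).and (inv_nat_small (by linarith))
    have hfr2 : ∃ᶠ k in atTop, limsup hs atTop - ε ≤ g (dk k) := by
      apply (hfr.and_eventually hev).mono
      rintro k ⟨hk1, hk2, hk3⟩
      obtain ⟨hd1, hd2⟩ := dk_sandwich k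
      have := (HS k hk2 (dk k) hd1 hd2).1
      linarith
    have hfreqδ : ∃ᶠ δ in 𝓝[>] (0:ℝ), limsup hs atTop - ε ≤ g δ :=
      dk_tendsto.frequently hfr2
    have := le_limsup_of_frequently_le hfreqδ (g_bdd_le HS)
    linarith

end master

lemma hs_liminf_lt_limsup : liminf hs atTop < limsup hs atTop := by
  have hsub1 : Tendsto (fun k : ℕ => 2^(2*k+2) - 1) atTop atTop := by
    apply tendsto_atTop_mono (fun k => ?_) tendsto_id
    have h1 : k < 2^k := Nat.lt_two_pow_self
    have h2 : (2:ℕ)^k ≤ 2^(2*k+2) := Nat.pow_le_pow_right (by norm_num) (by omega)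
    simp only [id_eq]
    omega
  have hsub2 : Tendsto (fun k : ℕ => 2^(2*k+1) - 1) atTop atTop := by
    apply tendsto_atTop_mono (fun k => ?_) tendsto_id
    have h1 : k < 2^k := Nat.lt_two_pow_self
    have h2 : (2:ℕ)^k ≤ 2^(2*k+1) := Nat.pow_le_pow_right (by norm_num) (by omega)
    simp only [id_eq]
    omega
  have hle : liminf hs atTop ≤ 3/10 := by
    apply liminf_le_of_frequently_le _ hs_bdd_ge
    apply hsub1.frequently
    exact Frequently.of_forall (fun k => le_of_eq (hs_val1 k))
  have hge : 1/3 ≤ limsup hs atTop := by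
    apply le_limsup_of_frequently_le _ hs_bdd_le
    apply hsub2.frequently
    exact Frequently.of_forall (fun k => hs_val2 k)
  linarith


end S1

/-- There is an IFS `{φ₀, φ₁}` of two bi-Lipschitz contractions on ℝ with
attractor `E` such that the `(1/2, 1/2)` stationary measure `μ` satisfies
`lower local dim (μ,x) = lower box dim E < upper box dim E = upper local dim (μ,x)` for
every `x ∈ E`; in particular `μ` is not exact dimensional. -/

theorem stmt1 :
    ∃ (φ₀ φ₁ : ℝ → ℝ) (A B : ℝ) (E : Set ℝ) (μ : Measure ℝ),
      0 < A ∧ A ≤ B ∧ B < 1 ∧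
      (∀ x y : ℝ, A * |x - y| ≤ |φ₀ x - φ₀ y| ∧ |φ₀ x - φ₀ y| ≤ B * |x - y|) ∧
      (∀ x y : ℝ, A * |x - y| ≤ |φ₁ x - φ₁ y| ∧ |φ₁ x - φ₁ y| ≤ B * |x - y|) ∧
      E.Nonempty ∧ IsCompact E ∧ E = φ₀ '' E ∪ φ₁ '' E ∧
      IsProbabilityMeasure μ ∧
      μ = (1/2 : ℝ≥0∞) • μ.map φ₀ + (1/2 : ℝ≥0∞) • μ.map φ₁ ∧
      μ Eᶜ = 0 ∧
      lowerBoxDim E < upperBoxDim E ∧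
      (∀ x ∈ E, lowerLocalDim μ x = lowerBoxDim E ∧ upperLocalDim μ x = upperBoxDim E) ∧
      ¬ ∃ C : ℝ, ∀ᵐ x ∂μ, lowerLocalDim μ x = C ∧ upperLocalDim μ x = C := by
  classical
  have HScov : ∀ n : ℕ, 1 ≤ n → ∀ δ : ℝ, S1.LL (n+2) ≤ δ → δ < S1.LL n / 2 →
      S1.hs n - 2/(n:ℝ) ≤ Real.log (coverNum S1.EE δ) / (-Real.log δ) ∧
      Real.log (coverNum S1.EE δ) / (-Real.log δ) ≤ S1.hs n + 1/(n:ℝ) := by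
    intro n hn δ h1 h2
    obtain ⟨hv1, hv2⟩ := S1.cover_sandwich h1 h2
    exact S1.logbridge hn h1 h2 hv1 hv2
  have hlow : lowerBoxDim S1.EE = Filter.liminf S1.hs Filter.atTop := by
    unfold lowerBoxDim
    exact S1.master_liminf HScov
  have hup : upperBoxDim S1.EE = Filter.limsup S1.hs Filter.atTop := by
    unfold upperBoxDim
    exact S1.master_limsup HScov
  have hlt : lowerBoxDim S1.EE < upperBoxDim S1.EE := by
    rw [hlow, hup]; exact S1.hs_liminf_lt_limsup
  have hloc : ∀ x ∈ S1.EE, lowerLocalDim S1.μμ x = lowerBoxDim S1.EE ∧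
      upperLocalDim S1.μμ x = upperBoxDim S1.EE := by
    rintro x ⟨ω, rfl⟩
    have hfun : (fun δ : ℝ => Real.log ((S1.μμ (Metric.closedBall (S1.pf ω) δ)).toReal) / Real.log δ)
        = fun δ : ℝ => Real.log (((S1.μμ (Metric.closedBall (S1.pf ω) δ)).toReal)⁻¹) / (-Real.log δ) := by
      funext δ
      rw [Real.log_inv, neg_div_neg_eq]
    have HSball : ∀ n : ℕ, 1 ≤ n → ∀ δ : ℝ, S1.LL (n+2) ≤ δ → δ < S1.LL n / 2 →
        S1.hs n - 2/(n:ℝ) ≤ Real.log (((S1.μμ (Metric.closedBall (S1.pf ω) δ)).toReal)⁻¹) / (-Real.log δ) ∧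
        Real.log (((S1.μμ (Metric.closedBall (S1.pf ω) δ)).toReal)⁻¹) / (-Real.log δ) ≤ S1.hs n + 1/(n:ℝ) := by
      intro n hn δ h1 h2
      obtain ⟨hp, hv1, hv2⟩ := S1.ball_sandwich ω h1 h2
      exact S1.logbridge hn h1 h2 hv1 hv2
    constructor
    · rw [hlow]
      unfold lowerLocalDim
      rw [hfun]
      exact S1.master_liminf HSball
    · rw [hup]
      unfold upperLocalDim
      rw [hfun]
      exact S1.master_limsup HSball
  refine ⟨S1.phi false, S1.phi true, 1/32, 1/2, S1.EE, S1.μμ,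
    by norm_num, by norm_num, by norm_num,
    fun x y => S1.phi_biLip false x y, fun x y => S1.phi_biLip true x y,
    S1.EE_nonempty, S1.EE_compact, S1.attractor, inferInstance,
    S1.mu_stat (S1.phi_measurable false) (S1.phi_measurable true)
      (S1.phi_pf false) (S1.phi_pf true),
    S1.μμ_compl, hlt, hloc, ?_⟩
  rintro ⟨Cst, hC⟩
  have hmeasE : MeasurableSet S1.EE := S1.EE_compact.isClosed.measurableSet
  have hE1 : S1.μμ S1.EE = 1 := by
    have hc := measure_add_measure_compl (μ := S1.μμ) hmeasE
    rw [S1.μμ_compl, add_zero] at hc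
    rw [hc]
    exact measure_univ
  have hbad : S1.μμ {x | ¬(lowerLocalDim S1.μμ x = Cst ∧ upperLocalDim S1.μμ x = Cst)} = 0 := by
    exact ae_iff.1 hC
  have hex : ∃ x, x ∈ S1.EE ∧ (lowerLocalDim S1.μμ x = Cst ∧ upperLocalDim S1.μμ x = Cst) := by
    by_contra h
    push_neg at h
    have hsub : S1.EE ⊆ {x | ¬(lowerLocalDim S1.μμ x = Cst ∧ upperLocalDim S1.μμ x = Cst)} := by
      intro x hx
      simp only [Set.mem_setOf_eq]
      intro hcon
      exact (h x hx hcon.1) hcon.2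
    have hle := measure_mono (μ := S1.μμ) hsub
    rw [hbad, hE1] at hle
    exact absurd hle (by norm_num)
  obtain ⟨x, hxE, h1, h2⟩ := hex
  obtain ⟨e1, e2⟩ := hloc x hxE
  rw [e1] at h1
  rw [e2] at h2
  rw [h1, h2] at hlt
  exact lt_irrefl _ hlt
end

section
/- There exists an IFS consisting of two bi-Lipschitz contractions on ℝ whose attractor has positive Lebesgue measure but empty interior. -/
open Filter Set Metric MeasureTheory Topology
open scoped ENNReal

/-!
The attractor is the symmetric Cantor set `E = {∑ ωₙ uₙ : ω ∈ {0,1}^ℕ}` with ratios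
`cₙ = (1 - 4^{-(n+1)})/2`. Its `2ⁿ` level-`n` intervals are disjoint, have total length
`∏_{j<n} (1 - 4^{-(j+1)}) ≥ 1/2` and individual lengths tending to `0`, so `E` has positive
measure and contains no interval. Splitting off the first digit gives `E = h(E) ∪ (u₀ + h(E))`
with `h(∑ ωₙ uₙ) = ∑ ωₙ uₙ₊₁`. Two codes whose digits first differ at `n` differ by the gap
`Gₙ = uₙ - ∑_{k>n} u_k` plus a nonnegative combination of the `u_k`, `k > n`; as `u_{n+1}/uₙ` and
`G_{n+1}/Gₙ` lie in `[1/16, 1/2]`, `h` is bi-Lipschitz on `E` with these constants. The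
McShane-type formula `x ↦ inf_{e ∈ E} (h e + max (t/16) (t/2))`, `t = x - e`, extends it to `ℝ`.
-/

open Function

theorem exists_extension_of_subadditive {G ι : Type*} [AddGroup G] [Nonempty ι] {g : G → ℝ}
    (hg₀ : g 0 = 0) (hg : ∀ s t, g (s + t) ≤ g s + g t) (p : ι → G) (q : ι → ℝ)
    (hpq : ∀ i j, q j ≤ q i + g (p j - p i)) :
    ∃ F : G → ℝ, (∀ x y, F y ≤ F x + g (y - x)) ∧ ∀ i, F (p i) = q i := by
  obtain ⟨i₀⟩ := ‹Nonempty ι›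
  have hbdd : ∀ x, BddBelow (Set.range fun i => q i + g (x - p i)) := fun x =>
    ⟨q i₀ - g (p i₀ - x), Set.forall_mem_range.2 fun i => by
      have := hg (p i₀ - x) (x - p i)
      rw [sub_add_sub_cancel] at this
      linarith [hpq i i₀]⟩
  refine ⟨fun x => ⨅ i, q i + g (x - p i), fun x y => ?_, fun j => ?_⟩
  · rw [← sub_le_iff_le_add]
    refine le_ciInf fun i => ?_
    have := hg (y - x) (x - p i)
    rw [sub_add_sub_cancel] at this
    linarith [ciInf_le (hbdd y) i]
  · refine le_antisymm ?_ (le_ciInf fun i => hpq i j)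
    simpa [hg₀] using ciInf_le (hbdd (p j)) j

theorem bilipschitz_of_le_add_max {A B : ℝ} {F : ℝ → ℝ} (hA : 0 ≤ A) (hAB : A ≤ B)
    (hF : ∀ x y, F y ≤ F x + max (A * (y - x)) (B * (y - x))) (x y : ℝ) :
    A * |x - y| ≤ |F x - F y| ∧ |F x - F y| ≤ B * |x - y| := by
  wlog h : y ≤ x generalizing x y
  · simpa only [abs_sub_comm] using this y x (le_of_not_ge h)
  have hd : 0 ≤ x - y := sub_nonneg.2 h
  have hup := hF y x
  have hlow := hF x y
  rw [max_eq_right (mul_le_mul_of_nonneg_right hAB hd)] at hup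
  rw [max_eq_left (by nlinarith : B * (y - x) ≤ A * (y - x))] at hlow
  rw [abs_of_nonneg hd, abs_of_nonneg (by nlinarith)]
  constructor <;> linarith

theorem exists_bilipschitz_extension {ι : Type*} [Nonempty ι] {A B : ℝ} (hA : 0 ≤ A)
    (hAB : A ≤ B) (p q : ι → ℝ)
    (hpq : ∀ i j, p i ≤ p j → A * (p j - p i) ≤ q j - q i ∧ q j - q i ≤ B * (p j - p i)) :
    ∃ F : ℝ → ℝ, (∀ x y, A * |x - y| ≤ |F x - F y| ∧ |F x - F y| ≤ B * |x - y|) ∧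
      ∀ i, F (p i) = q i := by
  obtain ⟨F, hF, hFpq⟩ := exists_extension_of_subadditive (g := fun t => max (A * t) (B * t))
    (by simp) (fun s t => by
      simp only [mul_add]
      exact max_le (add_le_add (le_max_left ..) (le_max_left ..))
        (add_le_add (le_max_right ..) (le_max_right ..)))
    p q (fun i j => by
      rcases le_total (p i) (p j) with h | h
      · linarith [(hpq i j h).2, le_max_right (A * (p j - p i)) (B * (p j - p i))]
      · linarith [(hpq j i h).1, le_max_left (A * (p j - p i)) (B * (p j - p i))])
  exact ⟨F, bilipschitz_of_le_add_max hA hAB hF, hFpq⟩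

theorem IsPreconnected.exists_subset_of_pairwise_disjoint {X ι : Type*} [TopologicalSpace X]
    [Finite ι] {s : Set X} {t : ι → Set X} (hs : IsPreconnected s) (hne : s.Nonempty)
    (ht : ∀ i, IsClosed (t i)) (hdisj : Pairwise (Disjoint on t)) (hst : s ⊆ ⋃ i, t i) :
    ∃ i, s ⊆ t i := by
  obtain ⟨x, hx⟩ := hne
  obtain ⟨i, hxi⟩ := Set.mem_iUnion.1 (hst hx)
  have hrest : IsClosed (⋃ j ∈ {j | j ≠ i}, t j) :=
    (Set.toFinite _).isClosed_biUnion fun j _ => ht j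
  have hcover : s ⊆ t i ∪ ⋃ j ∈ {j | j ≠ i}, t j := fun y hy => by
    obtain ⟨j, hyj⟩ := Set.mem_iUnion.1 (hst hy)
    by_cases hji : j = i
    · exact Or.inl (hji ▸ hyj)
    · exact Or.inr (Set.mem_biUnion hji hyj)
  have hsep : ∀ y ∈ t i, y ∉ ⋃ j ∈ {j | j ≠ i}, t j := fun y hyi hy => by
    obtain ⟨j, hji, hyj⟩ := Set.mem_iUnion₂.1 hy
    exact Set.disjoint_left.1 (hdisj hji) hyj hyi
  refine ⟨i, (isPreconnected_iff_subset_of_disjoint_closed.1 hs _ _ (ht i) hrest hcover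
    (Set.eq_empty_of_forall_notMem fun y hy => hsep y hy.2.1 hy.2.2)).resolve_right
    fun h => hsep x hxi (h hx)⟩

noncomputable def bitSum (v : ℕ → ℝ) (ω : ℕ → Bool) : ℝ := ∑' n, if ω n then v n else 0

noncomputable def tailSum (v : ℕ → ℝ) (n : ℕ) : ℝ := ∑' k, v (k + n)

/-- Length of the gap between the hulls of the cylinders `w0` and `w1`, for any word `w` of
length `n`. -/
noncomputable def gapLen (v : ℕ → ℝ) (n : ℕ) : ℝ := v n - tailSum v (n + 1)

section BitSum

variable {v w : ℕ → ℝ}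

theorem summable_bitTerm (hv : ∀ n, 0 ≤ v n) (hs : Summable v) (ω : ℕ → Bool) :
    Summable fun n => if ω n then v n else 0 :=
  hs.of_nonneg_of_le (fun n => by split <;> linarith [hv n]) (fun n => by split <;> linarith [hv n])

theorem continuous_bitSum (hv : ∀ n, 0 ≤ v n) (hs : Summable v) : Continuous (bitSum v) :=
  continuous_tsum (fun n => (continuous_of_discreteTopology (f := fun b : Bool =>
      if b then v n else 0)).comp (continuous_apply n)) hs
    (fun n ω => by split <;> simp [abs_of_nonneg (hv n), hv n])

theorem bitSum_mono (hv : ∀ n, 0 ≤ v n) (hs : Summable v) : Monotone (bitSum v) :=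
  fun ω τ h => (summable_bitTerm hv hs ω).tsum_le_tsum
    (fun n => by have := h n; split_ifs <;> simp_all [hv n, Bool.le_iff_imp])
    (summable_bitTerm hv hs τ)

theorem bitSum_le_bitSum (h : ∀ n, v n ≤ w n) (hv : ∀ n, 0 ≤ v n) (hvs : Summable v)
    (hws : Summable w) (ω : ℕ → Bool) : bitSum v ω ≤ bitSum w ω :=
  (summable_bitTerm hv hvs ω).tsum_le_tsum (fun n => by split <;> simp [h n])
    (summable_bitTerm (fun n => (hv n).trans (h n)) hws ω)

theorem bitSum_const_mul (a : ℝ) (ω : ℕ → Bool) :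
    bitSum (fun n => a * v n) ω = a * bitSum v ω := by
  rw [bitSum, bitSum, ← tsum_mul_left]
  congr! 2 with n
  split <;> simp

theorem bitSum_nonneg (hv : ∀ n, 0 ≤ v n) (ω : ℕ → Bool) : 0 ≤ bitSum v ω :=
  tsum_nonneg fun n => by split <;> simp [hv n]

theorem bitSum_add_bitSum_not (hv : ∀ n, 0 ≤ v n) (hs : Summable v) (ω : ℕ → Bool) :
    bitSum v ω + bitSum v (fun k => !ω k) = ∑' k, v k := by
  rw [bitSum, bitSum, ← (summable_bitTerm hv hs ω).tsum_add (summable_bitTerm hv hs _)]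
  exact tsum_congr fun k => by cases ω k <;> simp

theorem bitSum_eq_sum_add_bitSum_shift (hv : ∀ n, 0 ≤ v n) (hs : Summable v) (ω : ℕ → Bool)
    (m : ℕ) : bitSum v ω = ∑ k ∈ Finset.range m, (if ω k then v k else 0) +
      bitSum (fun k => v (k + m)) (fun k => ω (k + m)) :=
  ((summable_bitTerm hv hs ω).sum_add_tsum_nat_add m).symm

theorem bitSum_sub_bitSum_eq (hv : ∀ n, 0 ≤ v n) (hs : Summable v) {ω τ : ℕ → Bool} {n : ℕ}
    (hpre : ∀ j < n, ω j = τ j) (hω : ω n = false) (hτ : τ n = true) :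
    bitSum v τ - bitSum v ω = gapLen v n + bitSum (fun k => v (k + (n + 1)))
      (fun k => τ (k + (n + 1))) +
        bitSum (fun k => v (k + (n + 1))) (fun k => !ω (k + (n + 1))) := by
  have hhead : ∑ k ∈ Finset.range n, (if ω k then v k else 0) =
      ∑ k ∈ Finset.range n, (if τ k then v k else 0) :=
    Finset.sum_congr rfl fun k hk => by rw [hpre k (Finset.mem_range.1 hk)]
  have hcompl := bitSum_add_bitSum_not (fun k => hv (k + (n + 1)))
    ((summable_nat_add_iff (n + 1)).2 hs) (fun k => ω (k + (n + 1)))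
  rw [bitSum_eq_sum_add_bitSum_shift hv hs τ (n + 1),
    bitSum_eq_sum_add_bitSum_shift hv hs ω (n + 1),
    Finset.sum_range_succ, Finset.sum_range_succ, hhead, hω, hτ, gapLen, tailSum]
  simp only [if_true, Bool.false_eq_true, if_false]
  linarith

theorem bitSum_strictMono (hv : ∀ n, 0 ≤ v n) (hs : Summable v) (hgap : ∀ n, 0 < gapLen v n) :
    StrictMono fun x : Lex (ℕ → Bool) => bitSum v (ofLex x) := by
  rintro x y ⟨n, hpre, hlt⟩
  obtain ⟨hx, hy⟩ := Bool.lt_iff.1 hlt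
  have := bitSum_sub_bitSum_eq hv hs (ω := ofLex x) (τ := ofLex y) hpre hx hy
  linarith [hgap n, bitSum_nonneg (fun k => hv (k + (n + 1))) (fun k => ofLex y (k + (n + 1))),
    bitSum_nonneg (fun k => hv (k + (n + 1))) (fun k => !ofLex x (k + (n + 1)))]

theorem bitSum_sub_bitSum_mem_Icc {A B : ℝ} (hA : 0 ≤ A) (hv : ∀ n, 0 ≤ v n) (hs : Summable v)
    (hvw : ∀ n, A * v n ≤ w n ∧ w n ≤ B * v n)
    (hgap : ∀ n, A * gapLen v n ≤ gapLen w n ∧ gapLen w n ≤ B * gapLen v n)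
    {ω τ : ℕ → Bool} (h : toLex ω < toLex τ) :
    A * (bitSum v τ - bitSum v ω) ≤ bitSum w τ - bitSum w ω ∧
      bitSum w τ - bitSum w ω ≤ B * (bitSum v τ - bitSum v ω) := by
  obtain ⟨n, hpre, hlt⟩ := h
  obtain ⟨hω, hτ⟩ := Bool.lt_iff.1 hlt
  have hw : ∀ n, 0 ≤ w n := fun n => (mul_nonneg hA (hv n)).trans (hvw n).1
  have hws : Summable w := (hs.mul_left B).of_nonneg_of_le hw fun n => (hvw n).2
  have hs' := (summable_nat_add_iff (n + 1)).2 hs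
  have hws' := (summable_nat_add_iff (n + 1)).2 hws
  have hlow : ∀ σ, A * bitSum (fun k => v (k + (n + 1))) σ ≤ bitSum (fun k => w (k + (n + 1))) σ :=
    fun σ => by
      rw [← bitSum_const_mul]
      exact bitSum_le_bitSum (fun k => (hvw _).1) (fun k => mul_nonneg hA (hv _))
        (hs'.mul_left A) hws' σ
  have hupp : ∀ σ, bitSum (fun k => w (k + (n + 1))) σ ≤ B * bitSum (fun k => v (k + (n + 1))) σ :=
    fun σ => by
      rw [← bitSum_const_mul]
      exact bitSum_le_bitSum (fun k => (hvw _).2) (fun k => hw _) hws' (hs'.mul_left B) σ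
  rw [bitSum_sub_bitSum_eq hv hs (ω := ω) (τ := τ) hpre hω hτ,
    bitSum_sub_bitSum_eq hw hws (ω := ω) (τ := τ) hpre hω hτ]
  constructor
  · linarith [(hgap n).1, hlow fun k => τ (k + (n + 1)), hlow fun k => !ω (k + (n + 1))]
  · linarith [(hgap n).2, hupp fun k => τ (k + (n + 1)), hupp fun k => !ω (k + (n + 1))]

end BitSum

def padWord {n : ℕ} (w : Fin n → Bool) (b : Bool) : ℕ → Bool :=
  fun k => if h : k < n then w ⟨k, h⟩ else b

/-- The smallest interval containing the codes of all infinite words extending `w`. -/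
noncomputable def cylinderHull (v : ℕ → ℝ) {n : ℕ} (w : Fin n → Bool) : Set ℝ :=
  Icc (bitSum v (padWord w false)) (bitSum v (padWord w true))

noncomputable def cantorLevel (v : ℕ → ℝ) (n : ℕ) : Set ℝ :=
  ⋃ w : Fin n → Bool, cylinderHull v w

section CantorLevel

variable {v : ℕ → ℝ} (hv : ∀ n, 0 ≤ v n) (hs : Summable v)
include hv hs

theorem bitSum_padWord_true_sub_false {n : ℕ} (w : Fin n → Bool) :
    bitSum v (padWord w true) - bitSum v (padWord w false) = tailSum v n := by
  have htail : ∀ b, (fun k => padWord w b (k + n)) = fun _ => b := fun b => by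
    funext k
    simp [padWord]
  have hhead : ∑ k ∈ Finset.range n, (if padWord w true k then v k else 0) =
      ∑ k ∈ Finset.range n, (if padWord w false k then v k else 0) :=
    Finset.sum_congr rfl fun k hk => by simp [padWord, Finset.mem_range.1 hk]
  rw [bitSum_eq_sum_add_bitSum_shift hv hs _ n, bitSum_eq_sum_add_bitSum_shift hv hs _ n,
    htail, htail, hhead]
  simp [bitSum, tailSum]

theorem bitSum_mem_cylinderHull (ω : ℕ → Bool) (n : ℕ) :
    bitSum v ω ∈ cylinderHull v fun i : Fin n => ω i :=
  ⟨bitSum_mono hv hs fun k => by unfold padWord; split <;> simp,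
    bitSum_mono hv hs fun k => by unfold padWord; split <;> simp⟩

theorem cantorLevel_antitone : Antitone (cantorLevel v) := by
  refine antitone_nat_of_succ_le fun n x hx => ?_
  obtain ⟨w, hw⟩ := Set.mem_iUnion.1 hx
  refine Set.mem_iUnion.2 ⟨Fin.init w, Set.Icc_subset_Icc ?_ ?_ hw⟩ <;>
    refine bitSum_mono hv hs fun k => ?_ <;>
    · simp only [padWord, Fin.init]
      split_ifs <;> first | omega | simp

theorem bitSum_padWord_true_lt (hgap : ∀ n, 0 < gapLen v n) {n : ℕ} {w w' : Fin n → Bool}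
    (h : toLex w < toLex w') : bitSum v (padWord w true) < bitSum v (padWord w' false) := by
  obtain ⟨m, hpre, hlt⟩ := h
  refine bitSum_strictMono hv hs hgap (a := toLex (padWord w true)) (b := toLex (padWord w' false))
    ⟨m, fun j hj => ?_, ?_⟩
  · have hjn : j < n := hj.trans m.2
    simpa [padWord, hjn] using hpre ⟨j, hjn⟩ hj
  · simpa [padWord, m.2] using hlt

theorem disjoint_cylinderHull (hgap : ∀ n, 0 < gapLen v n) {n : ℕ} {w w' : Fin n → Bool}
    (h : w ≠ w') : Disjoint (cylinderHull v w) (cylinderHull v w') := by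
  rcases lt_or_gt_of_ne (toLex.injective.ne h) with hlt | hlt
  · exact Set.disjoint_left.2 fun x hx hx' =>
      (bitSum_padWord_true_lt hv hs hgap hlt).not_ge (hx'.1.trans hx.2)
  · exact Set.disjoint_left.2 fun x hx hx' =>
      (bitSum_padWord_true_lt hv hs hgap hlt).not_ge (hx.1.trans hx'.2)

theorem isClosed_range_bitSum : IsClosed (range (bitSum v)) :=
  (isCompact_range (continuous_bitSum hv hs)).isClosed

theorem range_bitSum_eq_iInter_cantorLevel : range (bitSum v) = ⋂ n, cantorLevel v n := by
  refine Set.Subset.antisymm (fun x ⟨ω, hx⟩ => Set.mem_iInter.2 fun n =>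
    Set.mem_iUnion.2 ⟨_, hx ▸ bitSum_mem_cylinderHull hv hs ω n⟩) fun x hx => ?_
  rw [← (isClosed_range_bitSum hv hs).closure_eq, Metric.mem_closure_iff]
  intro ε hε
  obtain ⟨n, hn⟩ := ((tendsto_sum_nat_add v).eventually (gt_mem_nhds hε)).exists
  obtain ⟨w, hw⟩ := Set.mem_iUnion.1 (Set.mem_iInter.1 hx n)
  refine ⟨_, Set.mem_range_self (padWord w false), ?_⟩
  have := bitSum_padWord_true_sub_false hv hs w
  rw [tailSum] at this
  rw [Real.dist_eq, abs_of_nonneg (by linarith [hw.1])]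
  exact lt_of_le_of_lt (by linarith [hw.2]) hn

theorem volume_cantorLevel (hgap : ∀ n, 0 < gapLen v n) (n : ℕ) :
    volume (cantorLevel v n) = 2 ^ n * ENNReal.ofReal (tailSum v n) := by
  rw [cantorLevel, measure_iUnion (fun w w' h => disjoint_cylinderHull hv hs hgap h)
    fun _ => measurableSet_Icc, tsum_fintype]
  simp [cylinderHull, Real.volume_Icc, bitSum_padWord_true_sub_false hv hs]

theorem ofReal_le_volume_range_bitSum (hgap : ∀ n, 0 < gapLen v n) {δ : ℝ}
    (hδ : ∀ n, δ ≤ 2 ^ n * tailSum v n) : ENNReal.ofReal δ ≤ volume (range (bitSum v)) := by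
  rw [range_bitSum_eq_iInter_cantorLevel hv hs, (cantorLevel_antitone hv hs).measure_iInter
    (fun n => (MeasurableSet.iUnion fun _ => measurableSet_Icc).nullMeasurableSet)
    ⟨0, by simp [volume_cantorLevel hv hs hgap]⟩]
  refine le_iInf fun n => ?_
  calc ENNReal.ofReal δ ≤ ENNReal.ofReal (2 ^ n * tailSum v n) := ENNReal.ofReal_le_ofReal (hδ n)
    _ = volume (cantorLevel v n) := by
      rw [volume_cantorLevel hv hs hgap, ENNReal.ofReal_mul (by positivity),
        ENNReal.ofReal_pow zero_le_two]
      simp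

theorem interior_range_bitSum (hgap : ∀ n, 0 < gapLen v n) : interior (range (bitSum v)) = ∅ := by
  refine Set.eq_empty_of_forall_notMem fun x hx => ?_
  obtain ⟨ε, hε, hball⟩ := Metric.mem_nhds_iff.1 (mem_interior_iff_mem_nhds.1 hx)
  obtain ⟨n, hn⟩ := ((tendsto_sum_nat_add v).eventually (gt_mem_nhds hε)).exists
  obtain ⟨w, hw⟩ := (convex_ball x ε).isPreconnected.exists_subset_of_pairwise_disjoint
    ⟨x, Metric.mem_ball_self hε⟩ (fun _ => isClosed_Icc)
    (fun w w' h => disjoint_cylinderHull hv hs hgap h)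
    (hball.trans ((range_bitSum_eq_iInter_cantorLevel hv hs).subset.trans (Set.iInter_subset _ n)))
  have hmem : ∀ t, |t| < ε → x + t ∈ cylinderHull v w := fun t ht =>
    hw (by rwa [Metric.mem_ball, Real.dist_eq, add_sub_cancel_left])
  have hleft := (hmem (-(ε / 2)) (by rw [abs_neg, abs_of_pos (half_pos hε)]; linarith)).1
  have hright := (hmem (ε / 2) (by rw [abs_of_pos (half_pos hε)]; linarith)).2
  have := bitSum_padWord_true_sub_false hv hs w
  rw [tailSum] at this
  linarith

end CantorLevel

theorem bitSum_consSeq {v : ℕ → ℝ} (hv : ∀ n, 0 ≤ v n) (hs : Summable v) (b : Bool)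
    (ω : ℕ → Bool) :
    bitSum v (consSeq b ω) = (if b then v 0 else 0) + bitSum (fun n => v (n + 1)) ω := by
  rw [bitSum, (summable_bitTerm hv hs _).tsum_eq_zero_add]
  simp [consSeq, bitSum]

theorem range_bitSum_eq_union {v : ℕ → ℝ} (hv : ∀ n, 0 ≤ v n) (hs : Summable v) :
    range (bitSum v) = range (bitSum fun n => v (n + 1)) ∪
      (fun x => v 0 + x) '' range (bitSum fun n => v (n + 1)) := by
  ext x
  constructor
  · rintro ⟨ω, rfl⟩
    rw [show ω = consSeq (ω 0) fun n => ω (n + 1) by funext n; cases n <;> rfl,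
      bitSum_consSeq hv hs]
    cases ω 0
    · exact Or.inl ⟨fun n => ω (n + 1), by simp⟩
    · exact Or.inr ⟨_, ⟨fun n => ω (n + 1), rfl⟩, by simp⟩
  · rintro (⟨ω, rfl⟩ | ⟨_, ⟨ω, rfl⟩, rfl⟩)
    · exact ⟨consSeq false ω, by simp [bitSum_consSeq hv hs]⟩
    · exact ⟨consSeq true ω, by simp [bitSum_consSeq hv hs]⟩

theorem exists_bilipschitz_ifs_range_bitSum {v : ℕ → ℝ} {A B : ℝ} (hA : 0 ≤ A) (hAB : A ≤ B)
    (hv : ∀ n, 0 ≤ v n) (hs : Summable v) (hgap : ∀ n, 0 < gapLen v n)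
    (hvw : ∀ n, A * v n ≤ v (n + 1) ∧ v (n + 1) ≤ B * v n)
    (hgapw : ∀ n, A * gapLen v n ≤ gapLen v (n + 1) ∧ gapLen v (n + 1) ≤ B * gapLen v n) :
    ∃ φ : ℝ → ℝ, (∀ x y, A * |x - y| ≤ |φ x - φ y| ∧ |φ x - φ y| ≤ B * |x - y|) ∧
      range (bitSum v) = φ '' range (bitSum v) ∪ (fun x => v 0 + φ x) '' range (bitSum v) := by
  have hmono := bitSum_strictMono hv hs hgap
  obtain ⟨φ, hφ, hφv⟩ := exists_bilipschitz_extension hA hAB (bitSum v)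
    (bitSum fun n => v (n + 1)) fun ω τ h => by
      rcases h.lt_or_eq with hlt | heq
      · exact bitSum_sub_bitSum_mem_Icc hA hv hs hvw hgapw
          ((hmono.lt_iff_lt (a := toLex ω) (b := toLex τ)).1 hlt)
      · obtain rfl : ω = τ := hmono.injective (a₁ := toLex ω) (a₂ := toLex τ) heq
        simp
  have himage : φ '' range (bitSum v) = range (bitSum fun n => v (n + 1)) := by
    rw [← Set.range_comp]
    exact congrArg Set.range (funext hφv)
  refine ⟨φ, hφ, ?_⟩
  rw [← Set.image_image (fun x => v 0 + x), himage]
  exact range_bitSum_eq_union hv hs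

noncomputable def cantorLen (c : ℕ → ℝ) (n : ℕ) : ℝ := ∏ j ∈ Finset.range n, c j

section SymCantor

variable {c : ℕ → ℝ}

theorem uSym_eq_cantorLen_sub (c : ℕ → ℝ) (n : ℕ) :
    uSym c n = cantorLen c n - cantorLen c (n + 1) := by
  simp only [uSym, cantorLen, Finset.prod_range_succ]
  ring

theorem cantorLen_succ (c : ℕ → ℝ) (n : ℕ) : cantorLen c (n + 1) = cantorLen c n * c n :=
  Finset.prod_range_succ c n

theorem two_pow_mul_cantorLen (c : ℕ → ℝ) (n : ℕ) :
    2 ^ n * cantorLen c n = ∏ j ∈ Finset.range n, 2 * c j := by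
  simp [cantorLen, Finset.prod_mul_distrib]

theorem uSym_succ (c : ℕ → ℝ) (n : ℕ) :
    uSym c (n + 1) = cantorLen c n * c n * (1 - c (n + 1)) := by
  rw [uSym, ← cantorLen, cantorLen_succ]

variable (hc : ∀ n, c n ∈ Ioo 0 (1 / 2))
include hc

theorem cantorLen_pos (n : ℕ) : 0 < cantorLen c n :=
  Finset.prod_pos fun j _ => (hc j).1

theorem uSym_nonneg (n : ℕ) : 0 ≤ uSym c n :=
  mul_nonneg (cantorLen_pos hc n).le (by linarith [(hc n).2])

theorem tendsto_cantorLen : Tendsto (cantorLen c) atTop (𝓝 0) := by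
  refine squeeze_zero (fun n => (cantorLen_pos hc n).le) (fun n => ?_)
    (tendsto_pow_atTop_nhds_zero_of_lt_one (by norm_num : (0 : ℝ) ≤ 1 / 2) (by norm_num))
  simpa [cantorLen] using
    Finset.prod_le_prod (s := Finset.range n) (fun j _ => (hc j).1.le) fun j _ => (hc j).2.le

theorem hasSum_uSym_tail (n : ℕ) : HasSum (fun k => uSym c (k + n)) (cantorLen c n) := by
  refine (hasSum_iff_tendsto_nat_of_nonneg (fun k => uSym_nonneg hc _) _).2 ?_
  have hpartial : ∀ m, ∑ k ∈ Finset.range m, uSym c (k + n) = cantorLen c n - cantorLen c (m + n) :=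
    fun m => by
      simpa [uSym_eq_cantorLen_sub, add_right_comm] using
        Finset.sum_range_sub' (fun k => cantorLen c (k + n)) m
  simp only [hpartial]
  simpa using tendsto_const_nhds.sub ((tendsto_cantorLen hc).comp (tendsto_add_atTop_nat n))

theorem tailSum_uSym (n : ℕ) : tailSum (uSym c) n = cantorLen c n :=
  (hasSum_uSym_tail hc n).tsum_eq

theorem summable_uSym : Summable (uSym c) := by
  simpa using (hasSum_uSym_tail hc 0).summable

theorem gapLen_uSym (n : ℕ) : gapLen (uSym c) n = cantorLen c n * (1 - 2 * c n) := by
  rw [gapLen, tailSum_uSym hc, uSym_eq_cantorLen_sub, cantorLen_succ]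
  ring

theorem gapLen_uSym_pos (n : ℕ) : 0 < gapLen (uSym c) n := by
  rw [gapLen_uSym hc]
  exact mul_pos (cantorLen_pos hc n) (by linarith [(hc n).2])

end SymCantor

noncomputable def fatRatio (n : ℕ) : ℝ := (1 - 4⁻¹ ^ (n + 1)) / 2

theorem fatRatio_succ (n : ℕ) : fatRatio (n + 1) = (1 - 4⁻¹ ^ (n + 1) / 4) / 2 := by
  rw [fatRatio, pow_succ]
  ring

theorem four_inv_pow_succ_mem (n : ℕ) : (4 : ℝ)⁻¹ ^ (n + 1) ∈ Ioc 0 (1 / 4) := by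
  refine ⟨by positivity, ?_⟩
  simpa using pow_le_pow_of_le_one (by norm_num : (0 : ℝ) ≤ 4⁻¹) (by norm_num)
    (Nat.le_add_left 1 n)

theorem fatRatio_mem (n : ℕ) : fatRatio n ∈ Ioo 0 (1 / 2) := by
  obtain ⟨h₀, h₁⟩ := four_inv_pow_succ_mem n
  constructor <;> rw [fatRatio] <;> linarith

theorem uSym_fatRatio_succ_mem (n : ℕ) :
    1 / 16 * uSym fatRatio n ≤ uSym fatRatio (n + 1) ∧
      uSym fatRatio (n + 1) ≤ 1 / 2 * uSym fatRatio n := by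
  have hT := cantorLen_pos fatRatio_mem n
  obtain ⟨h₀, h₁⟩ := four_inv_pow_succ_mem n
  rw [uSym_succ, fatRatio_succ, uSym, ← cantorLen, fatRatio]
  constructor <;> nlinarith [mul_pos hT h₀, mul_nonneg (mul_pos hT h₀).le (sub_nonneg.2 h₁)]

theorem gapLen_fatRatio_succ_mem (n : ℕ) :
    1 / 16 * gapLen (uSym fatRatio) n ≤ gapLen (uSym fatRatio) (n + 1) ∧
      gapLen (uSym fatRatio) (n + 1) ≤ 1 / 2 * gapLen (uSym fatRatio) n := by
  have hT := cantorLen_pos fatRatio_mem n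
  obtain ⟨h₀, h₁⟩ := four_inv_pow_succ_mem n
  rw [gapLen_uSym fatRatio_mem, gapLen_uSym fatRatio_mem, cantorLen_succ, fatRatio_succ, fatRatio]
  constructor <;> nlinarith [mul_pos hT h₀, mul_nonneg (mul_pos hT h₀).le (sub_nonneg.2 h₁)]

theorem half_le_two_pow_mul_cantorLen_fatRatio (n : ℕ) : 1 / 2 ≤ 2 ^ n * cantorLen fatRatio n := by
  suffices h : (1 + 4⁻¹ ^ n) / 2 ≤ ∏ j ∈ Finset.range n, 2 * fatRatio j by
    rw [two_pow_mul_cantorLen]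
    linarith [pow_pos (by norm_num : (0 : ℝ) < 4⁻¹) n]
  induction n with
  | zero => norm_num
  | succ n ih =>
    have hx : (0 : ℝ) < 4⁻¹ ^ n := by positivity
    have hx1 : (4 : ℝ)⁻¹ ^ n ≤ 1 := pow_le_one₀ (by norm_num) (by norm_num)
    rw [Finset.prod_range_succ, fatRatio, pow_succ]
    nlinarith [mul_le_mul_of_nonneg_right ih (by linarith : (0 : ℝ) ≤ 1 - 4⁻¹ ^ n * 4⁻¹)]

/-- There is an IFS of two bi-Lipschitz contractions on ℝ whose attractor
has positive Lebesgue measure but empty interior. -/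
theorem stmt2 :
    ∃ (φ₀ φ₁ : ℝ → ℝ) (A B : ℝ) (E : Set ℝ),
      0 < A ∧ A ≤ B ∧ B < 1 ∧
      (∀ x y : ℝ, A * |x - y| ≤ |φ₀ x - φ₀ y| ∧ |φ₀ x - φ₀ y| ≤ B * |x - y|) ∧
      (∀ x y : ℝ, A * |x - y| ≤ |φ₁ x - φ₁ y| ∧ |φ₁ x - φ₁ y| ≤ B * |x - y|) ∧
      E.Nonempty ∧ IsCompact E ∧ E = φ₀ '' E ∪ φ₁ '' E ∧
      0 < MeasureTheory.volume E ∧ interior E = ∅ := by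
  have hv := uSym_nonneg fatRatio_mem
  have hs := summable_uSym fatRatio_mem
  have hgap := gapLen_uSym_pos fatRatio_mem
  obtain ⟨φ, hφ, hE⟩ := exists_bilipschitz_ifs_range_bitSum (by norm_num : (0 : ℝ) ≤ 1 / 16)
    (by norm_num : (1 / 16 : ℝ) ≤ 1 / 2) hv hs hgap uSym_fatRatio_succ_mem gapLen_fatRatio_succ_mem
  -- `symCantor c` unfolds to `range (bitSum (uSym c))`.
  have hvol : ENNReal.ofReal (1 / 2) ≤ volume (symCantor fatRatio) :=
    ofReal_le_volume_range_bitSum hv hs hgap fun n => by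
      simpa [tailSum_uSym fatRatio_mem] using half_le_two_pow_mul_cantorLen_fatRatio n
  refine ⟨φ, fun x => uSym fatRatio 0 + φ x, 1 / 16, 1 / 2, symCantor fatRatio, by norm_num,
    by norm_num, by norm_num, hφ, fun x y => by simpa using hφ x y, range_nonempty _,
    isCompact_range (continuous_bitSum hv hs), hE, hvol.trans_lt' (by norm_num),
    interior_range_bitSum hv hs hgap⟩
end

section
/- Let E be a Cantor subset of [0,1] containing 0 and 1, with generating intervals {I_ω : ω ∈ Ω*} and gap intervals {G_ω : ω ∈ Ω*}, and let φ_0, φ_1 : [0,1] → [0,1] be the associated maps (φ_i maps I_∅ = [0,1] onto I_i, maps each gap G_ω affinely onto G_{iω}, and sends π(ω) to π(iω) for ω ∈ Ω^ℕ, where π is the coding map). Then for each i ∈ {0,1}, φ_i is a bi-Lipschitz contraction on [0,1] (i.e., there exist 0 < A ≤ B < 1 with A|x−y| ≤ |φ_i(x)−φ_i(y)| ≤ B|x−y| for all x,y ∈ [0,1]) if and only if 0 < inf_{ω∈Ω*} min{ |I_{iω}|/|I_ω| , |G_{iω}|/|G_ω| } and sup_{ω∈Ω*} max{ |I_{iω}|/|I_ω|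 , |G_{iω}|/|G_ω| } < 1. Moreover, in the bi-Lipschitz case one can take A = inf_{ω∈Ω*} min{ |I_{iω}|/|I_ω| , |G_{iω}|/|G_ω| } and B = sup_{ω∈Ω*} max{ |I_{iω}|/|I_ω| , |G_{iω}|/|G_ω| }. -/
open Filter Set Metric MeasureTheory Topology
open scoped ENNReal

section Stmt5AuxSection
set_option linter.unusedSectionVars false

namespace Stmt5Aux

def pref (σ : ℕ → Bool) (n : ℕ) : List Bool := List.ofFn fun j : Fin n => σ j

lemma pref_zero (σ : ℕ → Bool) : pref σ 0 = [] := rfl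

lemma pref_succ (σ : ℕ → Bool) (n : ℕ) : pref σ (n+1) = pref σ n ++ [σ n] := by
  rw [pref, List.ofFn_succ']
  simp [pref, List.concat_eq_append, Fin.coe_castSucc, Fin.val_last]

lemma pref_exists_append (σ : ℕ → Bool) {m n : ℕ} (h : m ≤ n) :
    ∃ t, pref σ n = pref σ m ++ t := by
  induction n, h using Nat.le_induction with
  | base => exact ⟨[], by simp⟩
  | succ n hmn ih =>
    obtain ⟨t, ht⟩ := ih
    exact ⟨t ++ [σ n], by rw [pref_succ, ht, List.append_assoc]⟩

lemma pref_length (σ : ℕ → Bool) (n : ℕ) : (pref σ n).length = n := by simp [pref]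

/-- Bundled hypotheses of the Cantor construction. -/
structure Cantor (l r : List Bool → ℝ) : Prop where
  h0 : l [] = 0
  h1 : r [] = 1
  hlen : ∀ w : List Bool, l w < r w
  hL : ∀ w : List Bool, l (w ++ [false]) = l w
  hR : ∀ w : List Bool, r (w ++ [true]) = r w
  hgapne : ∀ w : List Bool, r (w ++ [false]) < l (w ++ [true])
  hsmall : ∀ ε : ℝ, 0 < ε → ∃ N : ℕ, ∀ w : List Bool, N ≤ w.length → r w - l w < ε

namespace Cantor

variable {l r : List Bool → ℝ} (hc : Cantor l r)
include hc

lemma l_le_cat (v : List Bool) : ∀ w, l w ≤ l (w ++ v) := by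
  induction v with
  | nil => intro w; simp
  | cons b v ih =>
    intro w
    have h1 : l w ≤ l (w ++ [b]) := by
      cases b
      · exact (hc.hL w).ge
      · have := hc.hlen (w ++ [false]); have h2 := hc.hgapne w
        rw [hc.hL w] at this; linarith
    calc l w ≤ l (w ++ [b]) := h1
      _ ≤ l ((w ++ [b]) ++ v) := ih _
      _ = l (w ++ b :: v) := by rw [List.append_assoc]; rfl

lemma r_cat_le (v : List Bool) : ∀ w, r (w ++ v) ≤ r w := by
  induction v with
  | nil => intro w; simp
  | cons b v ih =>
    intro w
    have h1 : r (w ++ [b]) ≤ r w := by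
      cases b
      · have := hc.hlen (w ++ [true]); have h2 := hc.hgapne w
        rw [hc.hR w] at this; linarith
      · exact (hc.hR w).le
    calc r (w ++ b :: v) = r ((w ++ [b]) ++ v) := by rw [List.append_assoc]; rfl
      _ ≤ r (w ++ [b]) := ih _
      _ ≤ r w := h1

lemma l_nonneg (w : List Bool) : 0 ≤ l w := by
  have := hc.l_le_cat w []
  simpa [hc.h0] using this

lemma r_le_one (w : List Bool) : r w ≤ 1 := by
  have := hc.r_cat_le w []
  simpa [hc.h1] using this

end Cantor

end Stmt5Aux

namespace Stmt5Aux
namespace Cantor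

variable {l r : List Bool → ℝ} (hc : Cantor l r)
include hc

lemma code_eq_iSup (σ : ℕ → Bool) : codeMapL l σ = ⨆ n : ℕ, l (pref σ n) := rfl

lemma pref_le_one (σ : ℕ → Bool) (n : ℕ) : l (pref σ n) ≤ 1 := by
  have h1 : l (pref σ n) ≤ r (pref σ n) := (hc.hlen _).le
  exact h1.trans (hc.r_le_one _)

lemma bddAbove_code (σ : ℕ → Bool) : BddAbove (Set.range fun n => l (pref σ n)) := by
  refine ⟨1, ?_⟩
  rintro x ⟨n, rfl⟩
  exact hc.pref_le_one σ n

lemma le_code (σ : ℕ → Bool) (n : ℕ) : l (pref σ n) ≤ codeMapL l σ := by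
  rw [hc.code_eq_iSup]
  exact le_ciSup (hc.bddAbove_code σ) n

lemma code_le {σ : ℕ → Bool} {c : ℝ} (h : ∀ n, l (pref σ n) ≤ c) : codeMapL l σ ≤ c := by
  rw [hc.code_eq_iSup]; exact ciSup_le h

lemma code_eq {σ : ℕ → Bool} {c : ℝ} (hub : ∀ n, l (pref σ n) ≤ c)
    (hlt : ∀ z, z < c → ∃ n, z < l (pref σ n)) : codeMapL l σ = c := by
  rw [hc.code_eq_iSup]
  exact ciSup_eq_of_forall_le_of_forall_lt_exists_gt hub hlt

end Cantor

lemma consSeq_getD (i : Bool) (w : List Bool) (d : Bool) :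
    consSeq i (fun k => w.getD k d) = fun k => ((i :: w).getD k d) := by
  funext k
  cases k with
  | zero => simp [consSeq]
  | succ k => simp [consSeq]

lemma pref_getD_le (w : List Bool) (d : Bool) (n : ℕ) (h : n ≤ w.length) :
    pref (fun k => w.getD k d) n = w.take n := by
  apply List.ext_getElem
  · simp [pref_length, h]
  · intro j h1 h2
    simp only [pref, List.getElem_ofFn]
    simp only [List.getElem_take]
    rw [pref_length] at h1
    exact List.getD_eq_getElem w d (lt_of_lt_of_le h1 h)

lemma pref_getD_ge (w : List Bool) (d : Bool) (n : ℕ) (h : w.length ≤ n) :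
    pref (fun k => w.getD k d) n = w ++ List.replicate (n - w.length) d := by
  apply List.ext_getElem
  · simp [pref_length]; omega
  · intro j h1 h2
    simp only [pref, List.getElem_ofFn]
    rw [pref_length] at h1
    by_cases hj : j < w.length
    · rw [List.getElem_append_left hj]
      exact List.getD_eq_getElem w d hj
    · push_neg at hj
      rw [List.getElem_append_right (le_of_not_gt (by omega))]
      rw [List.getElem_replicate]
      exact List.getD_eq_default w d hj


namespace Cantor

variable {l r : List Bool → ℝ} (hc : Cantor l r)
include hc

lemma l_cat_replicate_false (w : List Bool) (k : ℕ) :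
    l (w ++ List.replicate k false) = l w := by
  induction k with
  | zero => simp
  | succ k ih =>
    rw [List.replicate_succ', ← List.append_assoc, hc.hL, ih]

lemma r_cat_replicate_true (w : List Bool) (k : ℕ) :
    r (w ++ List.replicate k true) = r w := by
  induction k with
  | zero => simp
  | succ k ih =>
    rw [List.replicate_succ', ← List.append_assoc, hc.hR, ih]

lemma l_take_le (w : List Bool) (n : ℕ) : l (w.take n) ≤ l w := by
  have := hc.l_le_cat (w.drop n) (w.take n)
  rwa [List.take_append_drop] at this

lemma code_l (w : List Bool) : codeMapL l (fun k => w.getD k false) = l w := by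
  apply hc.code_eq
  · intro n
    rcases le_or_gt n w.length with h | h
    · rw [pref_getD_le w false n h]
      exact hc.l_take_le w n
    · rw [pref_getD_ge w false n h.le, hc.l_cat_replicate_false]
  · intro z hz
    refine ⟨w.length, ?_⟩
    rwa [pref_getD_le w false _ le_rfl, List.take_length]

lemma code_r (w : List Bool) : codeMapL l (fun k => w.getD k true) = r w := by
  apply hc.code_eq
  · intro n
    rcases le_or_gt n w.length with h | h
    · rw [pref_getD_le w true n h]
      exact (hc.l_take_le w n).trans (hc.hlen w).le
    · rw [pref_getD_ge w true n h.le]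
      exact (hc.hlen _).le.trans (hc.r_cat_replicate_true w _).le
  · intro z hz
    obtain ⟨N, hN⟩ := hc.hsmall (r w - z) (by linarith)
    refine ⟨w.length + N, ?_⟩
    rw [pref_getD_ge w true _ (by omega)]
    set u := w ++ List.replicate (w.length + N - w.length) true with hu
    have hlu : N ≤ u.length := by simp [hu]
    have h1 : r u - l u < r w - z := hN u hlu
    have h2 : r u = r w := hc.r_cat_replicate_true w _
    linarith [h2 ▸ h1]

end Cantor

lemma pref_consSeq (i : Bool) (σ : ℕ → Bool) (n : ℕ) :
    pref (consSeq i σ) (n + 1) = i :: pref σ n := by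
  simp only [pref, List.ofFn_succ]
  simp [consSeq]

namespace Cantor

variable {l r : List Bool → ℝ} (hc : Cantor l r)
include hc

lemma phi_l {i : Bool} {φ : ℝ → ℝ}
    (hφcode : ∀ ω : ℕ → Bool, φ (codeMapL l ω) = codeMapL l (consSeq i ω))
    (w : List Bool) : φ (l w) = l (i :: w) := by
  have h := hφcode (fun k => w.getD k false)
  rw [hc.code_l w, consSeq_getD, hc.code_l (i :: w)] at h
  exact h

lemma phi_r {i : Bool} {φ : ℝ → ℝ}
    (hφcode : ∀ ω : ℕ → Bool, φ (codeMapL l ω) = codeMapL l (consSeq i ω))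
    (w : List Bool) : φ (r w) = r (i :: w) := by
  have h := hφcode (fun k => w.getD k true)
  rw [hc.code_r w, consSeq_getD, hc.code_r (i :: w)] at h
  exact h


lemma phi_mem {i : Bool} {φ : ℝ → ℝ}
    (hφgap : ∀ w : List Bool, ∀ x ∈ Set.Ioo (r (w ++ [false])) (l (w ++ [true])),
      φ x = (l ((i :: w) ++ [true]) - r ((i :: w) ++ [false])) /
              (l (w ++ [true]) - r (w ++ [false])) * (x - r (w ++ [false])) +
            r ((i :: w) ++ [false]))
    (hφcode : ∀ ω : ℕ → Bool, φ (codeMapL l ω) = codeMapL l (consSeq i ω))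
    (w : List Bool) (x : ℝ) (hx : x ∈ Set.Icc (l w) (r w)) :
    φ x ∈ Set.Icc (l (i :: w)) (r (i :: w)) := by
  classical
  by_cases hg : ∃ v, x ∈ Set.Ioo (r ((w ++ v) ++ [false])) (l ((w ++ v) ++ [true]))
  · obtain ⟨v, hv⟩ := hg
    rw [hφgap (w ++ v) x hv]
    have hga : r ((w ++ v) ++ [false]) < l ((w ++ v) ++ [true]) := hc.hgapne (w ++ v)
    have hgb : r ((i :: (w ++ v)) ++ [false]) < l ((i :: (w ++ v)) ++ [true]) :=
      hc.hgapne (i :: (w ++ v))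
    set s := (l ((i :: (w ++ v)) ++ [true]) - r ((i :: (w ++ v)) ++ [false])) /
      (l ((w ++ v) ++ [true]) - r ((w ++ v) ++ [false])) with hs_def
    have hs : 0 < s := div_pos (by linarith) (by linarith)
    constructor
    · have h1 : l (i :: w) ≤ l (i :: (w ++ v)) := hc.l_le_cat v (i :: w)
      have h2 : l (i :: (w ++ v)) ≤ r ((i :: (w ++ v)) ++ [false]) := by
        have h3 := hc.hlen ((i :: (w ++ v)) ++ [false])
        have h4 := hc.hL (i :: (w ++ v))
        linarith
      have h3 : 0 ≤ s * (x - r ((w ++ v) ++ [false])) :=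
        mul_nonneg hs.le (by linarith [hv.1])
      linarith
    · have h4 : s * (x - r ((w ++ v) ++ [false])) ≤
          s * (l ((w ++ v) ++ [true]) - r ((w ++ v) ++ [false])) :=
        mul_le_mul_of_nonneg_left (by linarith [hv.2]) hs.le
      have h5 : s * (l ((w ++ v) ++ [true]) - r ((w ++ v) ++ [false])) =
          l ((i :: (w ++ v)) ++ [true]) - r ((i :: (w ++ v)) ++ [false]) :=
        div_mul_cancel₀ _ (by linarith)
      have h6 : l ((i :: (w ++ v)) ++ [true]) ≤ r (i :: (w ++ v)) := by
        have h7 := hc.hlen ((i :: (w ++ v)) ++ [true])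
        have h8 := hc.hR (i :: (w ++ v))
        linarith
      have h7 : r (i :: (w ++ v)) ≤ r (i :: w) := hc.r_cat_le v (i :: w)
      linarith
  · push_neg at hg
    set g : ℕ → List Bool := fun n => Nat.rec (motive := fun _ => List Bool) w
      (fun _ u => u ++ [if l (u ++ [true]) ≤ x then true else false]) n with hgdef
    have hg0 : g 0 = w := rfl
    have hgs : ∀ n, g (n + 1) = g n ++ [if l (g n ++ [true]) ≤ x then true else false] :=
      fun n => rfl
    have hglen : ∀ n, (g n).length = w.length + n := by
      intro n
      induction n with
      | zero => simp [hg0]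
      | succ n ih => rw [hgs n]; simp [ih]; omega
    have hinv : ∀ n, (∃ v, g n = w ++ v) ∧ x ∈ Set.Icc (l (g n)) (r (g n)) := by
      intro n
      induction n with
      | zero => exact ⟨⟨[], by simp [hg0]⟩, by rwa [hg0]⟩
      | succ n ih =>
        obtain ⟨⟨v, hvv⟩, hxin⟩ := ih
        have hnotgap : x ∉ Set.Ioo (r (g n ++ [false])) (l (g n ++ [true])) := by
          rw [hvv]; exact hg v
        by_cases hle : l (g n ++ [true]) ≤ x
        · have heq : g (n + 1) = g n ++ [true] := by rw [hgs n, if_pos hle]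
          refine ⟨⟨v ++ [true], by rw [heq, hvv, List.append_assoc]⟩, ?_⟩
          rw [heq]
          exact ⟨hle, by rw [hc.hR]; exact hxin.2⟩
        · push_neg at hle
          have heq : g (n + 1) = g n ++ [false] := by rw [hgs n, if_neg (not_le.mpr hle)]
          have hx0 : x ≤ r (g n ++ [false]) := by
            by_contra hcon
            push_neg at hcon
            exact hnotgap ⟨hcon, hle⟩
          refine ⟨⟨v ++ [false], by rw [heq, hvv, List.append_assoc]⟩, ?_⟩
          rw [heq]
          exact ⟨by rw [hc.hL]; exact hxin.1, hx0⟩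
    set σ : ℕ → Bool := fun k => (g (k + 1)).getD k false with hσdef
    have hstab : ∀ m n, m ≤ n → ∀ j, j < (g m).length →
        (g n).getD j false = (g m).getD j false := by
      intro m n h
      induction n, h using Nat.le_induction with
      | base => intro j hj; rfl
      | succ n hmn ih =>
        intro j hj
        rw [hgs n, List.getD_append _ _ _ j
          (lt_of_lt_of_le hj (by rw [hglen m, hglen n]; omega))]
        exact ih j hj
    have hprefEq : ∀ m, pref σ (w.length + m) = g m := by
      intro m
      apply List.ext_getElem
      · rw [pref_length, hglen]
      · intro j h1 h2
        simp only [pref, List.getElem_ofFn]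
        rw [pref_length] at h1
        have hj1 : (g (j + 1)).getD j false = (g m).getD j false := by
          rcases le_total (j + 1) m with h | h
          · refine (hstab (j + 1) m h j ?_).symm
            have hh := hglen (j + 1); omega
          · refine hstab m (j + 1) h j ?_
            have hh := hglen m; omega
        show (g (j + 1)).getD j false = _
        rw [hj1, List.getD_eq_getElem (g m) false h2]
    have hxcode : x = codeMapL l σ := by
      symm
      apply hc.code_eq
      · intro n
        obtain ⟨t, ht⟩ := pref_exists_append σ (show n ≤ w.length + n by omega)
        have h1 : l (pref σ n) ≤ l (pref σ (w.length + n)) := by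
          rw [ht]; exact hc.l_le_cat t _
        rw [hprefEq n] at h1
        exact h1.trans (hinv n).2.1
      · intro z hz
        obtain ⟨N, hN⟩ := hc.hsmall (x - z) (by linarith)
        refine ⟨w.length + N, ?_⟩
        rw [hprefEq N]
        have h1 := hN (g N) (by rw [hglen]; omega)
        have h2 := (hinv N).2
        have h3 := h2.1
        have h4 := h2.2
        linarith
    rw [hxcode, hφcode σ]
    have hw0 : pref σ w.length = w := by
      have := hprefEq 0
      simpa [hg0] using this
    constructor
    · have h1 := hc.le_code (consSeq i σ) (w.length + 1)
      rw [pref_consSeq, hw0] at h1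
      exact h1
    · apply hc.code_le
      intro n
      cases n with
      | zero =>
        show l ([] : List Bool) ≤ _
        have h1 := hc.l_nonneg (i :: w)
        have h2 := hc.hlen (i :: w)
        rw [hc.h0]
        linarith
      | succ m =>
        rw [pref_consSeq]
        rcases le_total m w.length with h | h
        · obtain ⟨t, ht⟩ := pref_exists_append σ h
          rw [hw0] at ht
          have h1 : l (i :: pref σ m) ≤ l ((i :: pref σ m) ++ t) := hc.l_le_cat t _
          rw [show (i :: pref σ m) ++ t = i :: w from congrArg (List.cons i) ht.symm] at h1
          exact h1.trans (hc.hlen _).le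
        · obtain ⟨t, ht⟩ := pref_exists_append σ h
          rw [hw0] at ht
          have h1 : l (i :: pref σ m) ≤ r (i :: pref σ m) := (hc.hlen _).le
          have h2 : r (i :: pref σ m) ≤ r (i :: w) := by
            rw [ht]
            exact hc.r_cat_le t (i :: w)
          exact h1.trans h2


lemma phi_gap_closed {i : Bool} {φ : ℝ → ℝ}
    (hφgap : ∀ w : List Bool, ∀ x ∈ Set.Ioo (r (w ++ [false])) (l (w ++ [true])),
      φ x = (l ((i :: w) ++ [true]) - r ((i :: w) ++ [false])) /
              (l (w ++ [true]) - r (w ++ [false])) * (x - r (w ++ [false])) +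
            r ((i :: w) ++ [false]))
    (hφcode : ∀ ω : ℕ → Bool, φ (codeMapL l ω) = codeMapL l (consSeq i ω))
    (w : List Bool) (x : ℝ) (hx : x ∈ Set.Icc (r (w ++ [false])) (l (w ++ [true]))) :
    φ x = (l ((i :: w) ++ [true]) - r ((i :: w) ++ [false])) /
            (l (w ++ [true]) - r (w ++ [false])) * (x - r (w ++ [false])) +
          r ((i :: w) ++ [false]) := by
  rcases eq_or_lt_of_le hx.1 with h | h
  · rw [← h, hc.phi_r hφcode (w ++ [false])]
    simp
  · rcases eq_or_lt_of_le hx.2 with h2 | h2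
    · rw [h2, hc.phi_l hφcode (w ++ [true])]
      have hg := hc.hgapne w
      have h3 : (l ((i :: w) ++ [true]) - r ((i :: w) ++ [false])) /
            (l (w ++ [true]) - r (w ++ [false])) * (l (w ++ [true]) - r (w ++ [false])) =
          l ((i :: w) ++ [true]) - r ((i :: w) ++ [false]) :=
        div_mul_cancel₀ _ (ne_of_gt (by linarith))
      rw [h3]
      ring_nf
      rfl
    · exact hφgap w x ⟨h, h2⟩

end Cantor
namespace Cantor

variable {l r : List Bool → ℝ} (hc : Cantor l r)
include hc

lemma ratio_nonempty (i : Bool) : (ratioSet l r i).Nonempty :=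
  ⟨_, Or.inl ⟨[], rfl⟩⟩

lemma ratio_pos (i : Bool) : ∀ ρ ∈ ratioSet l r i, 0 < ρ := by
  rintro ρ (⟨w, rfl⟩ | ⟨w, rfl⟩)
  · exact div_pos (by linarith [hc.hlen (i :: w)]) (by linarith [hc.hlen w])
  · exact div_pos (by linarith [hc.hgapne (i :: w)]) (by linarith [hc.hgapne w])

lemma ratio_bddBelow (i : Bool) : BddBelow (ratioSet l r i) :=
  ⟨0, fun ρ hρ => (hc.ratio_pos i ρ hρ).le⟩

section RatioBounds

variable {i : Bool} (hBdd : BddAbove (ratioSet l r i))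
include hBdd

lemma sInf_le_sSup_ratio : sInf (ratioSet l r i) ≤ sSup (ratioSet l r i) :=
  csInf_le_csSup (hc.ratio_nonempty i) (hc.ratio_bddBelow i) hBdd

lemma int_lb (w : List Bool) :
    sInf (ratioSet l r i) * (r w - l w) ≤ r (i :: w) - l (i :: w) := by
  have h1 : sInf (ratioSet l r i) ≤ (r (i :: w) - l (i :: w)) / (r w - l w) :=
    csInf_le (hc.ratio_bddBelow i) (Or.inl ⟨w, rfl⟩)
  have h2 : (0 : ℝ) < r w - l w := by linarith [hc.hlen w]
  calc sInf (ratioSet l r i) * (r w - l w)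
      ≤ (r (i :: w) - l (i :: w)) / (r w - l w) * (r w - l w) :=
        mul_le_mul_of_nonneg_right h1 h2.le
    _ = r (i :: w) - l (i :: w) := div_mul_cancel₀ _ h2.ne'

lemma int_ub (w : List Bool) :
    r (i :: w) - l (i :: w) ≤ sSup (ratioSet l r i) * (r w - l w) := by
  have h1 : (r (i :: w) - l (i :: w)) / (r w - l w) ≤ sSup (ratioSet l r i) :=
    le_csSup hBdd (Or.inl ⟨w, rfl⟩)
  have h2 : (0 : ℝ) < r w - l w := by linarith [hc.hlen w]
  calc r (i :: w) - l (i :: w)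
      = (r (i :: w) - l (i :: w)) / (r w - l w) * (r w - l w) :=
        (div_mul_cancel₀ _ h2.ne').symm
    _ ≤ sSup (ratioSet l r i) * (r w - l w) := mul_le_mul_of_nonneg_right h1 h2.le

lemma gap_lb (w : List Bool) :
    sInf (ratioSet l r i) ≤ (l ((i :: w) ++ [true]) - r ((i :: w) ++ [false])) /
      (l (w ++ [true]) - r (w ++ [false])) :=
  csInf_le (hc.ratio_bddBelow i) (Or.inr ⟨w, rfl⟩)

lemma gap_ub (w : List Bool) :
    (l ((i :: w) ++ [true]) - r ((i :: w) ++ [false])) /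
      (l (w ++ [true]) - r (w ++ [false])) ≤ sSup (ratioSet l r i) :=
  le_csSup hBdd (Or.inr ⟨w, rfl⟩)

end RatioBounds


section Key

variable {i : Bool} {φ : ℝ → ℝ}
  (hφgap : ∀ w : List Bool, ∀ x ∈ Set.Ioo (r (w ++ [false])) (l (w ++ [true])),
      φ x = (l ((i :: w) ++ [true]) - r ((i :: w) ++ [false])) /
              (l (w ++ [true]) - r (w ++ [false])) * (x - r (w ++ [false])) +
            r ((i :: w) ++ [false]))
  (hφcode : ∀ ω : ℕ → Bool, φ (codeMapL l ω) = codeMapL l (consSeq i ω))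
  (hBdd : BddAbove (ratioSet l r i))
  (hA : 0 < sInf (ratioSet l r i)) (hB : sSup (ratioSet l r i) < 1)
include hφgap hφcode hBdd hA hB

lemma key (ε : ℝ) (hε : 0 < ε) (N : ℕ) (hN : ∀ w : List Bool, N ≤ w.length → r w - l w < ε) :
    ∀ d : ℕ, ∀ w : List Bool, N ≤ w.length + d →
      ((∀ x ∈ Set.Icc (l w) (r w),
          sInf (ratioSet l r i) * (r w - x) - 2*ε ≤ φ (r w) - φ x ∧
          φ (r w) - φ x ≤ sSup (ratioSet l r i) * (r w - x) + 2*ε) ∧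
       (∀ x ∈ Set.Icc (l w) (r w),
          sInf (ratioSet l r i) * (x - l w) - 2*ε ≤ φ x - φ (l w) ∧
          φ x - φ (l w) ≤ sSup (ratioSet l r i) * (x - l w) + 2*ε)) ∧
      (∀ x ∈ Set.Icc (l w) (r w), ∀ y ∈ Set.Icc (l w) (r w), x ≤ y →
          sInf (ratioSet l r i) * (y - x) - 4*ε ≤ φ y - φ x ∧
          φ y - φ x ≤ sSup (ratioSet l r i) * (y - x) + 4*ε) := by
  set A := sInf (ratioSet l r i) with hAdef
  set B := sSup (ratioSet l r i) with hBdef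
  have hAB : A ≤ B := hc.sInf_le_sSup_ratio hBdd
  have hA1 : A < 1 := lt_of_le_of_lt hAB hB
  have hB0 : 0 < B := lt_of_lt_of_le hA hAB
  intro d
  induction d with
  | zero =>
    intro w hw
    have hsw : r w - l w < ε := hN w (by omega)
    have hmem : ∀ z ∈ Set.Icc (l w) (r w), φ z ∈ Set.Icc (l (i :: w)) (r (i :: w)) :=
      fun z hz => hc.phi_mem hφgap hφcode w z hz
    have hiub : r (i :: w) - l (i :: w) ≤ B * (r w - l w) := hc.int_ub hBdd w
    have hpair : ∀ a ∈ Set.Icc (l w) (r w), ∀ b ∈ Set.Icc (l w) (r w), b ≤ a →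
        A * (a - b) - 2*ε ≤ φ a - φ b ∧ φ a - φ b ≤ B * (a - b) + 2*ε := by
      intro a ha b hb hba
      have h1 := hmem a ha
      have h2 := hmem b hb
      have hub : φ a - φ b ≤ B * ε := by
        have h3 : φ a - φ b ≤ r (i :: w) - l (i :: w) := by
          have := h1.2; have := h2.1; linarith
        have h4 : B * (r w - l w) ≤ B * ε := mul_le_mul_of_nonneg_left hsw.le hB0.le
        linarith
      have hlb : -(B * ε) ≤ φ a - φ b := by
        have h3 : φ b - φ a ≤ r (i :: w) - l (i :: w) := by
          have := h2.2; have := h1.1; linarith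
        have h4 : B * (r w - l w) ≤ B * ε := mul_le_mul_of_nonneg_left hsw.le hB0.le
        linarith
      have hab1 : A * (a - b) ≤ 1 * ε := by
        apply mul_le_mul hA1.le (by linarith [ha.2, hb.1]) (by linarith) zero_le_one
      have hBe : B * ε ≤ 1 * ε := mul_le_mul_of_nonneg_right hB.le hε.le
      constructor
      · linarith
      · have hBab : 0 ≤ B * (a - b) := mul_nonneg hB0.le (by linarith)
        linarith
    refine ⟨⟨fun x hx => hpair (r w) (Set.right_mem_Icc.mpr (hc.hlen w).le) x hx hx.2,
      fun x hx => hpair x hx (l w) (Set.left_mem_Icc.mpr (hc.hlen w).le) hx.1⟩,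
      fun x hx y hy hxy => ?_⟩
    obtain ⟨h1, h2⟩ := hpair y hy x hx hxy
    exact ⟨by linarith, by linarith⟩
  | succ d ih =>
    intro w hw
    have IH0 := ih (w ++ [false]) (by simp; omega)
    have IH1 := ih (w ++ [true]) (by simp; omega)
    have hlw0 : l (w ++ [false]) = l w := hc.hL w
    have hrw1 : r (w ++ [true]) = r w := hc.hR w
    set m0 := r (w ++ [false]) with hm0def
    set m1 := l (w ++ [true]) with hm1def
    have hm01 : m0 < m1 := hc.hgapne w
    have hlm0 : l w < m0 := by have := hc.hlen (w ++ [false]); rw [hlw0] at this; exact this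
    have hm1r : m1 < r w := by have := hc.hlen (w ++ [true]); rw [hrw1] at this; exact this
    set s := (l ((i :: w) ++ [true]) - r ((i :: w) ++ [false])) / (m1 - m0) with hsdef
    have hsA : A ≤ s := hc.gap_lb hBdd w
    have hsB : s ≤ B := hc.gap_ub hBdd w
    have hgapd : ∀ z1 ∈ Set.Icc m0 m1, ∀ z2 ∈ Set.Icc m0 m1, φ z1 - φ z2 = s * (z1 - z2) := by
      intro z1 hz1 z2 hz2
      rw [hc.phi_gap_closed hφgap hφcode w z1 hz1, hc.phi_gap_closed hφgap hφcode w z2 hz2]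
      ring
    have hEbot_ub : φ m0 - φ (l w) ≤ B * (m0 - l w) := by
      have h1 : φ m0 - φ (l w) = r (i :: (w ++ [false])) - l (i :: (w ++ [false])) := by
        conv_lhs => rw [← hlw0]
        rw [hc.phi_r hφcode (w ++ [false]), hc.phi_l hφcode (w ++ [false])]
      have h2 := hc.int_ub hBdd (w ++ [false])
      rw [hlw0] at h2
      linarith
    have hEbot_lb : A * (m0 - l w) ≤ φ m0 - φ (l w) := by
      have h1 : φ m0 - φ (l w) = r (i :: (w ++ [false])) - l (i :: (w ++ [false])) := by
        conv_lhs => rw [← hlw0]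
        rw [hc.phi_r hφcode (w ++ [false]), hc.phi_l hφcode (w ++ [false])]
      have h2 := hc.int_lb hBdd (w ++ [false])
      rw [hlw0] at h2
      linarith
    have hEtop_ub : φ (r w) - φ m1 ≤ B * (r w - m1) := by
      have h1 : φ (r w) - φ m1 = r (i :: (w ++ [true])) - l (i :: (w ++ [true])) := by
        conv_lhs => rw [← hrw1]
        rw [hc.phi_r hφcode (w ++ [true]), hc.phi_l hφcode (w ++ [true])]
      have h2 := hc.int_ub hBdd (w ++ [true])
      rw [hrw1] at h2
      linarith
    have hEtop_lb : A * (r w - m1) ≤ φ (r w) - φ m1 := by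
      have h1 : φ (r w) - φ m1 = r (i :: (w ++ [true])) - l (i :: (w ++ [true])) := by
        conv_lhs => rw [← hrw1]
        rw [hc.phi_r hφcode (w ++ [true]), hc.phi_l hφcode (w ++ [true])]
      have h2 := hc.int_lb hBdd (w ++ [true])
      rw [hrw1] at h2
      linarith
    have C1of0 : ∀ x ∈ Set.Icc (l w) m0,
        A * (m0 - x) - 2*ε ≤ φ m0 - φ x ∧ φ m0 - φ x ≤ B * (m0 - x) + 2*ε := by
      intro x hx
      exact IH0.1.1 x ⟨by rw [hlw0]; exact hx.1, hx.2⟩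
    have C2of0 : ∀ x ∈ Set.Icc (l w) m0,
        A * (x - l w) - 2*ε ≤ φ x - φ (l w) ∧ φ x - φ (l w) ≤ B * (x - l w) + 2*ε := by
      intro x hx
      have h1 := IH0.1.2 x ⟨by rw [hlw0]; exact hx.1, hx.2⟩
      rwa [hlw0] at h1
    have C1of1 : ∀ x ∈ Set.Icc m1 (r w),
        A * (r w - x) - 2*ε ≤ φ (r w) - φ x ∧ φ (r w) - φ x ≤ B * (r w - x) + 2*ε := by
      intro x hx
      have h1 := IH1.1.1 x ⟨hx.1, by rw [hrw1]; exact hx.2⟩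
      rwa [hrw1] at h1
    have C2of1 : ∀ x ∈ Set.Icc m1 (r w),
        A * (x - m1) - 2*ε ≤ φ x - φ m1 ∧ φ x - φ m1 ≤ B * (x - m1) + 2*ε := by
      intro x hx
      exact IH1.1.2 x ⟨hx.1, by rw [hrw1]; exact hx.2⟩
    have Main0 : ∀ x ∈ Set.Icc (l w) m0, ∀ y ∈ Set.Icc (l w) m0, x ≤ y →
        A * (y - x) - 4*ε ≤ φ y - φ x ∧ φ y - φ x ≤ B * (y - x) + 4*ε := by
      intro x hx y hy hxy
      exact IH0.2 x ⟨by rw [hlw0]; exact hx.1, hx.2⟩ y ⟨by rw [hlw0]; exact hy.1, hy.2⟩ hxy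
    have Main1 : ∀ x ∈ Set.Icc m1 (r w), ∀ y ∈ Set.Icc m1 (r w), x ≤ y →
        A * (y - x) - 4*ε ≤ φ y - φ x ∧ φ y - φ x ≤ B * (y - x) + 4*ε := by
      intro x hx y hy hxy
      exact IH1.2 x ⟨hx.1, by rw [hrw1]; exact hx.2⟩ y ⟨hy.1, by rw [hrw1]; exact hy.2⟩ hxy
    have slope_ub : ∀ u v : ℝ, u ≤ v → s * (v - u) ≤ B * (v - u) :=
      fun u v h => mul_le_mul_of_nonneg_right hsB (by linarith)
    have slope_lb : ∀ u v : ℝ, u ≤ v → A * (v - u) ≤ s * (v - u) :=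
      fun u v h => mul_le_mul_of_nonneg_right hsA (by linarith)
    have hmidfull : φ m1 - φ m0 = s * (m1 - m0) :=
      hgapd m1 ⟨hm01.le, le_rfl⟩ m0 ⟨le_rfl, hm01.le⟩
    refine ⟨⟨?_, ?_⟩, ?_⟩
    · -- C1
      intro x hx
      rcases le_or_gt x m0 with h | h
      · obtain ⟨hl1, hu1⟩ := C1of0 x ⟨hx.1, h⟩
        constructor
        · have h1 := slope_lb m0 m1 hm01.le
          have hr : A * (r w - x) = A * (r w - m1) + A * (m1 - m0) + A * (m0 - x) := by ring
          linarith [hEtop_lb]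
        · have h1 := slope_ub m0 m1 hm01.le
          have hr : B * (r w - x) = B * (r w - m1) + B * (m1 - m0) + B * (m0 - x) := by ring
          linarith [hEtop_ub]
      · rcases le_or_gt m1 x with h2 | h2
        · exact C1of1 x ⟨h2, hx.2⟩
        · have hmid : φ m1 - φ x = s * (m1 - x) := hgapd m1 ⟨hm01.le, le_rfl⟩ x ⟨h.le, h2.le⟩
          constructor
          · have h1 := slope_lb x m1 h2.le
            have hr : A * (r w - x) = A * (r w - m1) + A * (m1 - x) := by ring
            linarith [hEtop_lb]
          · have h1 := slope_ub x m1 h2.le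
            have hr : B * (r w - x) = B * (r w - m1) + B * (m1 - x) := by ring
            linarith [hEtop_ub]
    · -- C2
      intro x hx
      rcases le_or_gt m1 x with h | h
      · obtain ⟨hl1, hu1⟩ := C2of1 x ⟨h, hx.2⟩
        constructor
        · have h1 := slope_lb m0 m1 hm01.le
          have hr : A * (x - l w) = A * (x - m1) + A * (m1 - m0) + A * (m0 - l w) := by ring
          linarith [hEbot_lb]
        · have h1 := slope_ub m0 m1 hm01.le
          have hr : B * (x - l w) = B * (x - m1) + B * (m1 - m0) + B * (m0 - l w) := by ring
          linarith [hEbot_ub]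
      · rcases le_or_gt x m0 with h2 | h2
        · exact C2of0 x ⟨hx.1, h2⟩
        · have hmid : φ x - φ m0 = s * (x - m0) := hgapd x ⟨h2.le, h.le⟩ m0 ⟨le_rfl, hm01.le⟩
          constructor
          · have h1 := slope_lb m0 x h2.le
            have hr : A * (x - l w) = A * (x - m0) + A * (m0 - l w) := by ring
            linarith [hEbot_lb]
          · have h1 := slope_ub m0 x h2.le
            have hr : B * (x - l w) = B * (x - m0) + B * (m0 - l w) := by ring
            linarith [hEbot_ub]
    · -- Main
      intro x hx y hy hxy
      rcases le_or_gt y m0 with h | h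
      · exact Main0 x ⟨hx.1, hxy.trans h⟩ y ⟨hy.1, h⟩ hxy
      rcases le_or_gt m1 x with h' | h'
      · exact Main1 x ⟨h', hx.2⟩ y ⟨h'.trans hxy, hy.2⟩ hxy
      rcases le_or_gt x m0 with hx0 | hx0
      · rcases le_or_gt m1 y with hy1 | hy1
        · obtain ⟨l1, u1⟩ := C1of0 x ⟨hx.1, hx0⟩
          obtain ⟨l2, u2⟩ := C2of1 y ⟨hy1, hy.2⟩
          constructor
          · have h1 := slope_lb m0 m1 hm01.le
            have hr : A * (y - x) = A * (y - m1) + A * (m1 - m0) + A * (m0 - x) := by ring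
            linarith
          · have h1 := slope_ub m0 m1 hm01.le
            have hr : B * (y - x) = B * (y - m1) + B * (m1 - m0) + B * (m0 - x) := by ring
            linarith
        · obtain ⟨l1, u1⟩ := C1of0 x ⟨hx.1, hx0⟩
          have hmid : φ y - φ m0 = s * (y - m0) := hgapd y ⟨h.le, hy1.le⟩ m0 ⟨le_rfl, hm01.le⟩
          constructor
          · have h1 := slope_lb m0 y h.le
            have hr : A * (y - x) = A * (y - m0) + A * (m0 - x) := by ring
            linarith
          · have h1 := slope_ub m0 y h.le
            have hr : B * (y - x) = B * (y - m0) + B * (m0 - x) := by ring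
            linarith
      · rcases le_or_gt m1 y with hy1 | hy1
        · obtain ⟨l2, u2⟩ := C2of1 y ⟨hy1, hy.2⟩
          have hmid : φ m1 - φ x = s * (m1 - x) := hgapd m1 ⟨hm01.le, le_rfl⟩ x ⟨hx0.le, h'.le⟩
          constructor
          · have h1 := slope_lb x m1 h'.le
            have hr : A * (y - x) = A * (y - m1) + A * (m1 - x) := by ring
            linarith
          · have h1 := slope_ub x m1 h'.le
            have hr : B * (y - x) = B * (y - m1) + B * (m1 - x) := by ring
            linarith
        · have hmid : φ y - φ x = s * (y - x) := hgapd y ⟨hx0.le.trans hxy, hy1.le⟩ x ⟨hx0.le, h'.le⟩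
          constructor
          · have h1 := slope_lb x y hxy
            linarith
          · have h1 := slope_ub x y hxy
            linarith

lemma bilip :
    ∀ x ∈ Set.Icc (0:ℝ) 1, ∀ y ∈ Set.Icc (0:ℝ) 1,
      sInf (ratioSet l r i) * |x - y| ≤ |φ x - φ y| ∧
      |φ x - φ y| ≤ sSup (ratioSet l r i) * |x - y| := by
  set A := sInf (ratioSet l r i) with hAdef
  set B := sSup (ratioSet l r i) with hBdef
  have claim : ∀ x ∈ Set.Icc (0:ℝ) 1, ∀ y ∈ Set.Icc (0:ℝ) 1, x ≤ y →
      A * (y - x) ≤ φ y - φ x ∧ φ y - φ x ≤ B * (y - x) := by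
    intro x hx y hy hxy
    have h01 : Set.Icc (0:ℝ) 1 = Set.Icc (l ([]:List Bool)) (r ([]:List Bool)) := by
      rw [hc.h0, hc.h1]
    rw [h01] at hx hy
    have main : ∀ ε : ℝ, 0 < ε →
        A * (y - x) - 4*(ε/4) ≤ φ y - φ x ∧ φ y - φ x ≤ B * (y - x) + 4*(ε/4) := by
      intro ε hε
      obtain ⟨N, hN⟩ := hc.hsmall (ε/4) (by linarith)
      exact (hc.key hφgap hφcode hBdd hA hB (ε/4) (by linarith) N hN N []
        (by simp)).2 x hx y hy hxy
    constructor
    · have h1 : ∀ ε : ℝ, 0 < ε → A * (y - x) ≤ (φ y - φ x) + ε := by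
        intro ε hε
        have := (main ε hε).1
        linarith
      exact le_of_forall_pos_le_add h1
    · have h1 : ∀ ε : ℝ, 0 < ε → φ y - φ x ≤ B * (y - x) + ε := by
        intro ε hε
        have := (main ε hε).2
        linarith
      exact le_of_forall_pos_le_add h1
  intro x hx y hy
  rcases le_total x y with h | h
  · obtain ⟨h1, h2⟩ := claim x hx y hy h
    have hyx : 0 ≤ y - x := by linarith
    have hpos : 0 ≤ φ y - φ x := le_trans (mul_nonneg hA.le hyx) h1
    rw [abs_sub_comm x y, abs_sub_comm (φ x) (φ y), abs_of_nonneg hyx, abs_of_nonneg hpos]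
    exact ⟨h1, h2⟩
  · obtain ⟨h1, h2⟩ := claim y hy x hx h
    have hyx : 0 ≤ x - y := by linarith
    have hpos : 0 ≤ φ x - φ y := le_trans (mul_nonneg hA.le hyx) h1
    rw [abs_of_nonneg hyx, abs_of_nonneg hpos]
    exact ⟨h1, h2⟩

end Key

section Converse

variable {i : Bool} {φ : ℝ → ℝ}
  (hφcode : ∀ ω : ℕ → Bool, φ (codeMapL l ω) = codeMapL l (consSeq i ω))
include hφcode

lemma ratio_subset {A B : ℝ} (hA : 0 < A)
    (h : ∀ x ∈ Set.Icc (0:ℝ) 1, ∀ y ∈ Set.Icc (0:ℝ) 1,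
      A * |x - y| ≤ |φ x - φ y| ∧ |φ x - φ y| ≤ B * |x - y|) :
    ∀ ρ ∈ ratioSet l r i, A ≤ ρ ∧ ρ ≤ B := by
  have hmem : ∀ w : List Bool, l w ∈ Set.Icc (0:ℝ) 1 ∧ r w ∈ Set.Icc (0:ℝ) 1 := by
    intro w
    exact ⟨⟨hc.l_nonneg w, (hc.hlen w).le.trans (hc.r_le_one w)⟩,
      ⟨(hc.l_nonneg w).trans (hc.hlen w).le, hc.r_le_one w⟩⟩
  rintro ρ (⟨w, rfl⟩ | ⟨w, rfl⟩)
  · have h1 := h (l w) (hmem w).1 (r w) (hmem w).2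
    rw [hc.phi_l hφcode w, hc.phi_r hφcode w] at h1
    have hd : (0:ℝ) < r w - l w := by linarith [hc.hlen w]
    have hdi : (0:ℝ) < r (i :: w) - l (i :: w) := by linarith [hc.hlen (i :: w)]
    rw [abs_sub_comm (l w) (r w), abs_of_nonneg hd.le,
      abs_sub_comm (l (i :: w)) (r (i :: w)), abs_of_nonneg hdi.le] at h1
    constructor
    · rw [le_div_iff₀ hd]; exact h1.1
    · rw [div_le_iff₀ hd]; exact h1.2
  · have hx : r (w ++ [false]) ∈ Set.Icc (0:ℝ) 1 := (hmem (w ++ [false])).2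
    have hy : l (w ++ [true]) ∈ Set.Icc (0:ℝ) 1 := (hmem (w ++ [true])).1
    have h1 := h (r (w ++ [false])) hx (l (w ++ [true])) hy
    rw [hc.phi_r hφcode (w ++ [false]), hc.phi_l hφcode (w ++ [true])] at h1
    have hd : (0:ℝ) < l (w ++ [true]) - r (w ++ [false]) := by linarith [hc.hgapne w]
    have hdi : (0:ℝ) < l ((i :: w) ++ [true]) - r ((i :: w) ++ [false]) := by
      linarith [hc.hgapne (i :: w)]
    rw [abs_sub_comm (r (w ++ [false])) (l (w ++ [true])), abs_of_nonneg hd.le,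
      abs_sub_comm (r (i :: (w ++ [false]))) (l (i :: (w ++ [true])))] at h1
    rw [show l (i :: (w ++ [true])) - r (i :: (w ++ [false])) =
        l ((i :: w) ++ [true]) - r ((i :: w) ++ [false]) from rfl, abs_of_nonneg hdi.le] at h1
    constructor
    · rw [le_div_iff₀ hd]; exact h1.1
    · rw [div_le_iff₀ hd]; exact h1.2

end Converse

end Cantor
end Stmt5Aux

end Stmt5AuxSection

/-- Let `E` be a Cantor subset of `[0,1]` containing `0` and `1`, given by a
standard Cantor construction with generating intervals `I_w = [l w, r w]` and gaps
`G_w = (r (w·0), l (w·1))` (a finite word `ω₁…ωₙ` is the list `[ω₁, …, ωₙ]`, the children of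
`w` are `w ++ [b]`, and `iω` is `i :: ω`). Let `φ = φ_i` be the associated map: it maps each
gap `G_ω` affinely onto `G_{iω}` and sends `π(ω)` to `π(iω)`, where `π` is the coding map.
Then `φ_i` is a bi-Lipschitz contraction on `[0,1]` iff
`0 < inf_{ω} min{|I_{iω}|/|I_ω|, |G_{iω}|/|G_ω|}` and
`sup_{ω} max{|I_{iω}|/|I_ω|, |G_{iω}|/|G_ω|} < 1`; moreover in that case one can take these
inf and sup as the bi-Lipschitz constants `A` and `B`. -/
theorem stmt5
    (l r : List Bool → ℝ)
    (h0 : l [] = 0) (h1 : r [] = 1)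
    (hlen : ∀ w : List Bool, l w < r w)
    (hL : ∀ w : List Bool, l (w ++ [false]) = l w)
    (hR : ∀ w : List Bool, r (w ++ [true]) = r w)
    (hgapne : ∀ w : List Bool, r (w ++ [false]) < l (w ++ [true]))
    (hsmall : ∀ ε : ℝ, 0 < ε → ∃ N : ℕ, ∀ w : List Bool, N ≤ w.length → r w - l w < ε)
    (i : Bool) (φ : ℝ → ℝ)
    (hφgap : ∀ w : List Bool, ∀ x ∈ Set.Ioo (r (w ++ [false])) (l (w ++ [true])),
      φ x = (l ((i :: w) ++ [true]) - r ((i :: w) ++ [false])) /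
              (l (w ++ [true]) - r (w ++ [false])) * (x - r (w ++ [false])) +
            r ((i :: w) ++ [false]))
    (hφcode : ∀ ω : ℕ → Bool, φ (codeMapL l ω) = codeMapL l (consSeq i ω)) :
    ((∃ A B : ℝ, 0 < A ∧ A ≤ B ∧ B < 1 ∧
        ∀ x ∈ Set.Icc (0:ℝ) 1, ∀ y ∈ Set.Icc (0:ℝ) 1,
          A * |x - y| ≤ |φ x - φ y| ∧ |φ x - φ y| ≤ B * |x - y|) ↔
      (0 < sInf (ratioSet l r i) ∧ BddAbove (ratioSet l r i) ∧ sSup (ratioSet l r i) < 1)) ∧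
    ((0 < sInf (ratioSet l r i) ∧ BddAbove (ratioSet l r i) ∧ sSup (ratioSet l r i) < 1) →
      ∀ x ∈ Set.Icc (0:ℝ) 1, ∀ y ∈ Set.Icc (0:ℝ) 1,
        sInf (ratioSet l r i) * |x - y| ≤ |φ x - φ y| ∧
        |φ x - φ y| ≤ sSup (ratioSet l r i) * |x - y|) := by
  have hc : Stmt5Aux.Cantor l r := ⟨h0, h1, hlen, hL, hR, hgapne, hsmall⟩
  constructor
  · constructor
    · rintro ⟨A, B, hA, hAB, hB, h⟩
      have hsub := hc.ratio_subset hφcode hA h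
      refine ⟨?_, ⟨B, fun ρ hρ => (hsub ρ hρ).2⟩, ?_⟩
      · have h4 : A ≤ sInf (ratioSet l r i) :=
          le_csInf (hc.ratio_nonempty i) (fun ρ hρ => (hsub ρ hρ).1)
        linarith
      · have h4 : sSup (ratioSet l r i) ≤ B :=
          csSup_le (hc.ratio_nonempty i) (fun ρ hρ => (hsub ρ hρ).2)
        linarith
    · rintro ⟨h1', h2', h3'⟩
      exact ⟨sInf (ratioSet l r i), sSup (ratioSet l r i), h1', hc.sInf_le_sSup_ratio h2', h3',
        fun x hx y hy => hc.bilip hφgap hφcode h2' h1' h3' x hx y hy⟩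
  · rintro ⟨h1', h2', h3'⟩ x hx y hy
    exact hc.bilip hφgap hφcode h2' h1' h3' x hx y hy
end
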